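/- arXiv:1106.3453 — 5 statements merged into one kernel-verified Lean document; each statement's English description precedes it below -/
import Mathlib

section
/- Let m and n be integers with 2 ≤ m ≤ n and n ≥ 3, and let m_0 = max{k ∈ ℕ : k(k−1) − 1 ≤ n}. If m_0 + 1 ≤ m ≤ n/2, then the locating chromatic number of K_m □ K_n equals n + 2. -/
open SimpleGraph

/-- The distance from a vertex to a set of vertices. -/
noncomputable def setDist {V : Type*} (G : SimpleGraph V) (v : V) (S : Set V) : ℕ :=
  sInf (G.dist v '' S)

/-- The color code of a vertex with respect to a `k`-coloring `c`:
the tuple of distances to the color classes. -/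
noncomputable def colorCode {V : Type*} (G : SimpleGraph V) {k : ℕ} (c : V → Fin k)
    (v : V) : Fin k → ℕ :=
  fun i => setDist G v (c ⁻¹' {i})

/-- `c` is a locating `k`-coloring of `G`: a proper coloring onto the `k` colors
such that distinct vertices have distinct color codes. -/
def IsLocatingColoring {V : Type*} (G : SimpleGraph V) {k : ℕ} (c : V → Fin k) : Prop :=
  Function.Surjective c ∧
  (∀ u v : V, G.Adj u v → c u ≠ c v) ∧
  Function.Injective (colorCode G c)

/-- The locating chromatic number: the least `k` admitting a locating `k`-coloring. -/
noncomputable def locatingChromaticNumber {V : Type*} (G : SimpleGraph V) : ℕ :=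
  sInf {k : ℕ | ∃ c : V → Fin k, IsLocatingColoring G c}

/-- A vertex is colorful w.r.t. a coloring `c` if every color appears in its
closed neighborhood. -/
def IsColorful {V : Type*} (G : SimpleGraph V) {k : ℕ} (c : V → Fin k) (v : V) : Prop :=
  ∀ i : Fin k, ∃ u : V, (u = v ∨ G.Adj v u) ∧ c u = i

/-! `K_m □ K_n` has diameter two, so the color code of a vertex records exactly its color and the
set of colors in its closed neighbourhood; in particular two *colorful* vertices (seeing every
color) must have different colors.

Lower bound: a row is a clique on `n` vertices, so `k ≥ n`. If `k = n` every vertex is colorful,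
which is impossible. If `k = n + 1`, every row `i` misses exactly one color `f i`, and `(i, j)` is
colorful iff column `j` contains `f i`. The non-colorful cells of two rows with the same missing
color would need more than `n` distinct colors when `2m ≤ n`, so `f` is injective; then the
`m (m - 1)` cells lying in the column of some `f i` are colorful, giving `m (m - 1) ≤ n + 1`,
which the maximality of `m₀` rules out.

Upper bound: color `(i, j)` by `j + 2i` modulo `n + 2`. Row `i` misses exactly `n + 2i` and
`n + 2i + 1`; since `2m ≤ n`, no column contains both of them and every other row contains both,
which separates vertices in different rows. -/

open Finset

def closedNbhdColors {V : Type*} (G : SimpleGraph V) {k : ℕ} (c : V → Fin k) (v : V) :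
    Set (Fin k) :=
  {x | ∃ u, (u = v ∨ G.Adj v u) ∧ c u = x}

section General

variable {V : Type*} {G : SimpleGraph V} {k : ℕ} {c : V → Fin k} {u v : V} {x : Fin k}

lemma setDist_le_iff {S : Set V} (hS : S.Nonempty) {d : ℕ} :
    setDist G v S ≤ d ↔ ∃ w ∈ S, G.dist v w ≤ d := by
  refine ⟨fun h => ?_, fun ⟨w, hw, h⟩ => (Nat.sInf_le (Set.mem_image_of_mem _ hw)).trans h⟩
  obtain ⟨w, hw, hdist⟩ : sInf (G.dist v '' S) ∈ G.dist v '' S := Nat.sInf_mem (hS.image _)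
  exact ⟨w, hw, hdist ▸ h⟩

lemma SimpleGraph.Connected.dist_le_one_iff (hG : G.Connected) {w : V} :
    G.dist v w ≤ 1 ↔ w = v ∨ G.Adj v w := by
  rw [Nat.le_one_iff_eq_zero_or_eq_one, hG.dist_eq_zero_iff, dist_eq_one_iff_adj, eq_comm]

lemma colorCode_eq_zero_iff (hG : G.Connected) (hx : ∃ w, c w = x) :
    colorCode G c v x = 0 ↔ c v = x := by
  rw [← Nat.le_zero, colorCode, setDist_le_iff (S := c ⁻¹' {x}) hx]
  simp only [Set.mem_preimage, Set.mem_singleton_iff, Nat.le_zero, hG.dist_eq_zero_iff]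
  exact ⟨fun ⟨w, hw, hvw⟩ => hvw ▸ hw, fun h => ⟨v, h, rfl⟩⟩

lemma colorCode_le_one_iff (hG : G.Connected) (hx : ∃ w, c w = x) :
    colorCode G c v x ≤ 1 ↔ x ∈ closedNbhdColors G c v := by
  rw [colorCode, setDist_le_iff (S := c ⁻¹' {x}) hx]
  simp only [Set.mem_preimage, Set.mem_singleton_iff, hG.dist_le_one_iff, closedNbhdColors,
    Set.mem_ofPred_eq]
  exact ⟨fun ⟨w, hw, hvw⟩ => ⟨w, hvw, hw⟩, fun ⟨w, hvw, hw⟩ => ⟨w, hw, hvw⟩⟩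

lemma colorCode_le_two (hdist : ∀ u w, G.dist u w ≤ 2) (hx : ∃ w, c w = x) :
    colorCode G c v x ≤ 2 := by
  obtain ⟨w, hw⟩ := hx
  exact (setDist_le_iff ⟨w, hw⟩).2 ⟨w, hw, hdist v w⟩

open Classical in
lemma colorCode_eq_ite (hG : G.Connected) (hdist : ∀ u w, G.dist u w ≤ 2)
    (hc : Function.Surjective c) :
    colorCode G c v x =
      if c v = x then 0 else if x ∈ closedNbhdColors G c v then 1 else 2 := by
  have h0 := colorCode_eq_zero_iff (v := v) hG (hc x)
  have h1 := colorCode_le_one_iff (v := v) hG (hc x)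
  have h2 := colorCode_le_two (v := v) hdist (hc x)
  split_ifs with hvx hx
  · exact h0.2 hvx
  · have := h1.2 hx
    have := mt h0.1 hvx
    omega
  · have := mt h1.1 hx
    omega

lemma colorCode_eq_colorCode_iff (hG : G.Connected) (hdist : ∀ u w, G.dist u w ≤ 2)
    (hc : Function.Surjective c) :
    colorCode G c u = colorCode G c v ↔
      c u = c v ∧ closedNbhdColors G c u = closedNbhdColors G c v := by
  constructor
  · intro h
    refine ⟨((colorCode_eq_zero_iff hG (hc _)).1 ((congrFun h (c u)).symm.trans
      ((colorCode_eq_zero_iff hG (hc _)).2 rfl))).symm, Set.ext fun x => ?_⟩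
    rw [← colorCode_le_one_iff hG (hc x), ← colorCode_le_one_iff hG (hc x), h]
  · rintro ⟨hcol, hnbhd⟩
    funext x
    rw [colorCode_eq_ite hG hdist hc, colorCode_eq_ite hG hdist hc, hcol, hnbhd]

lemma colorCode_of_isColorful (hG : G.Connected) (hv : IsColorful G c v) :
    colorCode G c v = fun x => if c v = x then 0 else 1 := by
  funext x
  have hx : ∃ w, c w = x := (hv x).imp fun _ => And.right
  have h0 := colorCode_eq_zero_iff (v := v) hG hx
  have h1 := (colorCode_le_one_iff (v := v) hG hx).2 (hv x)
  split_ifs with hvx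
  · exact h0.2 hvx
  · have := mt h0.1 hvx
    omega

lemma IsLocatingColoring.injOn_isColorful (hG : G.Connected) (hc : IsLocatingColoring G c) :
    Set.InjOn c {v | IsColorful G c v} := fun u hu v hv huv =>
  hc.2.2 <| by rw [colorCode_of_isColorful hG hu, colorCode_of_isColorful hG hv, huv]

end General

lemma Function.Injective.exists_range_eq_compl_singleton {β γ : Type*} [Fintype β] [Fintype γ]
    {g : β → γ} (hg : Function.Injective g) (h : Fintype.card γ = Fintype.card β + 1) :
    ∃ y, Set.range g = {y}ᶜ := by
  classical
  have : #(univ.image g)ᶜ = 1 := by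
    rw [card_compl, card_image_of_injective _ hg, card_univ]
    omega
  obtain ⟨y, hy⟩ := card_eq_one.1 this
  refine ⟨y, Set.ext fun x => ?_⟩
  have := congrArg (x ∈ ·) hy
  simp only [mem_compl, mem_image, mem_univ, true_and, mem_singleton, eq_iff_iff] at this
  simp only [Set.mem_range, Set.mem_compl_iff, Set.mem_singleton_iff]
  tauto

abbrev rookGraph (α β : Type*) : SimpleGraph (α × β) :=
  (⊤ : SimpleGraph α) □ (⊤ : SimpleGraph β)

section Rook

variable {α β : Type*} {k : ℕ} {c : α × β → Fin k}

lemma rookGraph_adj {i i' : α} {j j' : β} :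
    (rookGraph α β).Adj (i, j) (i', j') ↔ i = i' ∧ j ≠ j' ∨ j = j' ∧ i ≠ i' := by
  simp only [boxProd_adj, top_adj]
  tauto

lemma rookGraph_connected [Nonempty α] [Nonempty β] : (rookGraph α β).Connected :=
  connected_boxProd.2 ⟨connected_top, connected_top⟩

lemma rookGraph_dist_le_two [Nonempty α] [Nonempty β] (u v : α × β) :
    (rookGraph α β).dist u v ≤ 2 := by
  classical
  have h : ((rookGraph α β).dist u v : ℕ∞) ≤ 2 := by
    rw [(rookGraph_connected.preconnected u v).coe_dist_eq_edist, edist_boxProd, edist_top,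
      edist_top]
    split_ifs <;> norm_num
  exact_mod_cast h

lemma rookGraph_adj_ne_iff :
    (∀ u v, (rookGraph α β).Adj u v → c u ≠ c v) ↔
      (∀ i, Function.Injective fun j => c (i, j)) ∧
        ∀ j, Function.Injective fun i => c (i, j) := by
  constructor
  · intro h
    exact ⟨fun i j j' hjj' => by_contra fun hne =>
        h _ _ (rookGraph_adj.2 (.inl ⟨rfl, hne⟩)) hjj',
      fun j i i' hii' => by_contra fun hne => h _ _ (rookGraph_adj.2 (.inr ⟨rfl, hne⟩)) hii'⟩
  · rintro ⟨hrow, hcol⟩ ⟨i, j⟩ ⟨i', j'⟩ hadj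
    rcases rookGraph_adj.1 hadj with ⟨rfl, hne⟩ | ⟨rfl, hne⟩
    · exact (hrow i).ne hne
    · exact (hcol j).ne hne

lemma mem_closedNbhdColors_rookGraph {i : α} {j : β} {x : Fin k} :
    x ∈ closedNbhdColors (rookGraph α β) c (i, j) ↔
      (∃ j', c (i, j') = x) ∨ ∃ i', c (i', j) = x := by
  constructor
  · rintro ⟨⟨i', j'⟩, hadj | hadj, rfl⟩
    · obtain ⟨rfl, rfl⟩ := Prod.mk.inj hadj
      exact .inl ⟨_, rfl⟩
    · rcases rookGraph_adj.1 hadj with ⟨rfl, -⟩ | ⟨rfl, -⟩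
      · exact .inl ⟨j', rfl⟩
      · exact .inr ⟨i', rfl⟩
  · rintro (⟨j', rfl⟩ | ⟨i', rfl⟩)
    · by_cases h : j = j'
      · exact ⟨_, .inl (by rw [h]), rfl⟩
      · exact ⟨_, .inr (rookGraph_adj.2 (.inl ⟨rfl, h⟩)), rfl⟩
    · by_cases h : i = i'
      · exact ⟨_, .inl (by rw [h]), rfl⟩
      · exact ⟨_, .inr (rookGraph_adj.2 (.inr ⟨rfl, h⟩)), rfl⟩

lemma isLocatingColoring_rookGraph_of_exists_missing (hsurj : Function.Surjective c)
    (hrow : ∀ i, Function.Injective fun j => c (i, j))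
    (hcol : ∀ j, Function.Injective fun i => c (i, j))
    (hmiss : ∀ i j, ∃ y, (∀ j', c (i, j') ≠ y) ∧ (∀ i', c (i', j) ≠ y) ∧
      ∀ i', i' ≠ i → ∃ j', c (i', j') = y) :
    IsLocatingColoring (rookGraph α β) c := by
  refine ⟨hsurj, rookGraph_adj_ne_iff.2 ⟨hrow, hcol⟩, ?_⟩
  rintro ⟨i, j⟩ ⟨i', j'⟩ h
  have : Nonempty α := ⟨i⟩
  have : Nonempty β := ⟨j⟩
  obtain ⟨hcolor, hnbhd⟩ :=
    (colorCode_eq_colorCode_iff rookGraph_connected rookGraph_dist_le_two hsurj).1 h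
  by_cases hii : i' = i
  · subst hii
    rw [hrow i' hcolor]
  · obtain ⟨y, hyrow, hycol, hyother⟩ := hmiss i j
    have hy : y ∈ closedNbhdColors (rookGraph α β) c (i', j') :=
      mem_closedNbhdColors_rookGraph.2 (.inl (hyother i' hii))
    rw [← hnbhd, mem_closedNbhdColors_rookGraph] at hy
    rcases hy with ⟨j'', hj''⟩ | ⟨i'', hi''⟩
    exacts [(hyrow j'' hj'').elim, (hycol i'' hi'').elim]

lemma IsLocatingColoring.injective_row (hc : IsLocatingColoring (rookGraph α β) c) (i : α) :
    Function.Injective fun j => c (i, j) :=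
  (rookGraph_adj_ne_iff.1 hc.2.1).1 i

lemma IsLocatingColoring.injective_col (hc : IsLocatingColoring (rookGraph α β) c) (j : β) :
    Function.Injective fun i => c (i, j) :=
  (rookGraph_adj_ne_iff.1 hc.2.1).2 j

lemma isColorful_rookGraph_iff_of_range_eq {f : α → Fin k}
    (hf : ∀ i, Set.range (fun j => c (i, j)) = {f i}ᶜ) {i : α} {j : β} :
    IsColorful (rookGraph α β) c (i, j) ↔ ∃ i', c (i', j) = f i := by
  have hrow (x : Fin k) : (∃ j', c (i, j') = x) ↔ x ≠ f i := by
    simpa using Set.ext_iff.1 (hf i) x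
  change (∀ x, x ∈ closedNbhdColors _ c (i, j)) ↔ _
  simp only [mem_closedNbhdColors_rookGraph, hrow]
  refine ⟨fun h => (h (f i)).resolve_left (not_not.2 rfl), fun h x => ?_⟩
  by_cases hx : x = f i
  · exact .inr (hx ▸ h)
  · exact .inl hx

lemma closedNbhdColors_rookGraph_of_not_isColorful {f : α → Fin k}
    (hf : ∀ i, Set.range (fun j => c (i, j)) = {f i}ᶜ) {i : α} {j : β}
    (h : ¬IsColorful (rookGraph α β) c (i, j)) :
    closedNbhdColors (rookGraph α β) c (i, j) = {f i}ᶜ := by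
  rw [isColorful_rookGraph_iff_of_range_eq hf] at h
  ext x
  rw [mem_closedNbhdColors_rookGraph, ← hf i]
  refine ⟨?_, .inl⟩
  rintro (hx | ⟨i', rfl⟩)
  · exact hx
  · rw [hf i]
    exact fun hfi => h ⟨i', hfi⟩

lemma IsLocatingColoring.eq_of_not_isColorful (hc : IsLocatingColoring (rookGraph α β) c)
    {f : α → Fin k} (hf : ∀ i, Set.range (fun j => c (i, j)) = {f i}ᶜ) {u v : α × β}
    (hu : ¬IsColorful (rookGraph α β) c u) (hv : ¬IsColorful (rookGraph α β) c v)
    (hcolor : c u = c v) (hfuv : f u.1 = f v.1) : u = v := by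
  obtain ⟨i, j⟩ := u
  obtain ⟨i', j'⟩ := v
  have : Nonempty α := ⟨i⟩
  have : Nonempty β := ⟨j⟩
  refine hc.2.2 ((colorCode_eq_colorCode_iff rookGraph_connected rookGraph_dist_le_two hc.1).2
    ⟨hcolor, ?_⟩)
  rw [closedNbhdColors_rookGraph_of_not_isColorful hf hu,
    closedNbhdColors_rookGraph_of_not_isColorful hf hv, hfuv]

lemma IsLocatingColoring.card_le [Fintype β] [Nonempty α]
    (hc : IsLocatingColoring (rookGraph α β) c) :
    Fintype.card β ≤ k := by
  simpa using Fintype.card_le_of_injective _ (hc.injective_row (Classical.arbitrary α))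

lemma IsLocatingColoring.ne_card [Fintype α] [Fintype β] [Nonempty β]
    (hc : IsLocatingColoring (rookGraph α β) c)
    (hα : 2 ≤ Fintype.card α) : k ≠ Fintype.card β := by
  intro hk
  have : Nonempty α := Fintype.card_pos_iff.1 (by omega)
  have hrow_surj (i : α) : Function.Surjective fun j => c (i, j) :=
    ((Fintype.bijective_iff_injective_and_card _).2 ⟨hc.injective_row i, by simp [hk]⟩).2
  have hcolorful (v : α × β) : IsColorful (rookGraph α β) c v := fun x =>
    mem_closedNbhdColors_rookGraph.2 (.inl (hrow_surj v.1 x))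
  have := Fintype.card_le_of_injective c fun u v huv =>
    hc.injOn_isColorful rookGraph_connected (hcolorful u) (hcolorful v) huv
  have hβ : 0 < Fintype.card β := Fintype.card_pos
  simp only [Fintype.card_prod, Fintype.card_fin, hk] at this
  nlinarith

lemma apply_ne_of_range_eq {f : α → Fin k} (hf : ∀ i, Set.range (fun j => c (i, j)) = {f i}ᶜ)
    (i : α) (j : β) : c (i, j) ≠ f i :=
  (hf i ▸ Set.mem_range_self j : c (i, j) ∈ ({f i}ᶜ : Set (Fin k)))

lemma IsLocatingColoring.card_filter_exists_add_two_le [Fintype α] [Fintype β]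
    (hc : IsLocatingColoring (rookGraph α β) c) {f : α → Fin k}
    (hf : ∀ i, Set.range (fun j => c (i, j)) = {f i}ᶜ) {i i' : α} (hii' : i ≠ i')
    (hfii' : f i = f i') :
    #{j | ∃ r, c (r, j) = f i} + 2 ≤ Fintype.card α := by
  classical
  have hrows : #((univ.erase i).erase i') = Fintype.card α - 2 := by
    rw [card_erase_of_mem (mem_erase.2 ⟨hii'.symm, mem_univ _⟩), card_erase_of_mem (mem_univ _),
      card_univ, Nat.sub_sub]
  have : 1 < Fintype.card α := Fintype.one_lt_card_iff.2 ⟨i, i', hii'⟩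
  suffices #{j | ∃ r, c (r, j) = f i} ≤ #((univ.erase i).erase i') by omega
  calc #{j | ∃ r, c (r, j) = f i}
      ≤ #(({v | c v = f i} : Finset (α × β)).image Prod.snd) := card_le_card fun j hj => by
        obtain ⟨r, hr⟩ := (mem_filter.1 hj).2
        exact mem_image.2 ⟨(r, j), mem_filter.2 ⟨mem_univ _, hr⟩, rfl⟩
    _ ≤ #({v | c v = f i} : Finset (α × β)) := card_image_le
    _ ≤ #((univ.erase i).erase i') := by
        refine card_le_card_of_injOn Prod.fst (fun v hv => ?_) ?_
        · have hv : c v = f i := (mem_filter.1 hv).2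
          simp only [coe_erase, coe_univ, Set.mem_sdiff, Set.mem_univ, Set.mem_singleton_iff,
            true_and]
          exact ⟨fun h => apply_ne_of_range_eq hf _ v.2 (hv.trans (congrArg f h).symm),
            fun h => apply_ne_of_range_eq hf _ v.2 (hv.trans (hfii'.trans (congrArg f h).symm))⟩
        · rintro ⟨a, b⟩ hv ⟨a', b'⟩ hw (rfl : a = a')
          exact Prod.ext rfl
            (hc.injective_row a ((mem_filter.1 hv).2.trans (mem_filter.1 hw).2.symm))

/-- The non-colorful cells of rows `i` and `i'` are those outside the columns containing `f i`;
they all miss the same color, so they need pairwise distinct colors other than `f i`. -/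
lemma IsLocatingColoring.two_mul_card_sub_card_filter_exists_le [Fintype α] [Fintype β]
    (hc : IsLocatingColoring (rookGraph α β) c) {f : α → Fin k}
    (hf : ∀ i, Set.range (fun j => c (i, j)) = {f i}ᶜ) {i i' : α} (hii' : i ≠ i')
    (hfii' : f i = f i') :
    2 * (Fintype.card β - #{j | ∃ r, c (r, j) = f i}) ≤ Fintype.card β := by
  classical
  set T := ({i, i'} : Finset α) ×ˢ ({j | ∃ r, c (r, j) = f i} : Finset β)ᶜ
  have hT_f {v} (hv : v ∈ T) : f v.1 = f i := by
    rcases (by simpa [T] using (mem_product.1 hv).1 : v.1 = i ∨ v.1 = i') with h | h <;> rw [h]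
    exact hfii'.symm
  have hT_not_isColorful {v} (hv : v ∈ T) : ¬IsColorful (rookGraph α β) c v := fun hcol => by
    obtain ⟨r, hr⟩ := (isColorful_rookGraph_iff_of_range_eq hf).1 hcol
    exact mem_compl.1 (mem_product.1 hv).2 (mem_filter.2 ⟨mem_univ _, r, hr.trans (hT_f hv)⟩)
  calc 2 * (Fintype.card β - #{j | ∃ r, c (r, j) = f i}) = #T := by
        rw [card_product, card_pair hii', card_compl]
    _ ≤ #(univ.image fun j => c (i, j)) := by
        refine card_le_card_of_injOn c (fun v hv => ?_) fun u hu v hv huv =>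
          hc.eq_of_not_isColorful hf (hT_not_isColorful hu) (hT_not_isColorful hv) huv
            ((hT_f hu).trans (hT_f hv).symm)
        obtain ⟨j, hj⟩ : c v ∈ Set.range fun j => c (i, j) := by
          rw [hf i, ← hT_f hv]
          exact apply_ne_of_range_eq hf _ v.2
        exact mem_image.2 ⟨j, mem_univ _, hj⟩
    _ ≤ Fintype.card β := card_image_le.trans (card_univ (α := β)).le

lemma IsLocatingColoring.injective_of_range_eq [Fintype α] [Fintype β]
    (hc : IsLocatingColoring (rookGraph α β) c) {f : α → Fin k}
    (hf : ∀ i, Set.range (fun j => c (i, j)) = {f i}ᶜ)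
    (h : 2 * Fintype.card α < Fintype.card β + 4) : Function.Injective f := by
  intro i i' hfii'
  by_contra hii'
  have := hc.card_filter_exists_add_two_le hf hii' hfii'
  have := hc.two_mul_card_sub_card_filter_exists_le hf hii' hfii'
  have := card_le_univ ({j | ∃ r, c (r, j) = f i} : Finset β)
  omega

/-- For `i ≠ r`, the cell of row `i` in the column where row `r` has color `f i` is colorful,
and distinct pairs `(i, r)` give distinct such cells. -/
lemma IsLocatingColoring.card_mul_pred_le [Fintype α] [Nonempty α] [Nonempty β]
    (hc : IsLocatingColoring (rookGraph α β) c) {f : α → Fin k}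
    (hf : ∀ i, Set.range (fun j => c (i, j)) = {f i}ᶜ) (hinj : Function.Injective f) :
    Fintype.card α * (Fintype.card α - 1) ≤ k := by
  classical
  let J (p : α × α) : β := Function.invFun (fun j => c (p.2, j)) (f p.1)
  have hJ {p : α × α} (hp : p ∈ (univ : Finset α).offDiag) : c (p.2, J p) = f p.1 := by
    refine Function.invFun_eq (f := fun j => c (p.2, j)) ?_
    rw [← Set.mem_range, hf]
    exact hinj.ne (mem_offDiag.1 hp).2.2
  have hJ_isColorful {p : α × α} (hp : p ∈ (univ : Finset α).offDiag) :
      IsColorful (rookGraph α β) c (p.1, J p) :=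
    (isColorful_rookGraph_iff_of_range_eq hf).2 ⟨p.2, hJ hp⟩
  have := card_le_card_of_injOn (fun p => c (p.1, J p)) (t := univ) (fun _ _ => mem_univ _)
    fun p hp q hq hpq => by
      obtain ⟨h₁, h₂⟩ := Prod.mk.inj <| hc.injOn_isColorful rookGraph_connected
        (hJ_isColorful hp) (hJ_isColorful hq) hpq
      refine Prod.ext h₁ (hc.injective_col (J p) ?_)
      show c (p.2, J p) = c (q.2, J p)
      rw [hJ hp, h₂, hJ hq, h₁]
  simpa [offDiag_card, Nat.mul_sub_one] using this

lemma IsLocatingColoring.card_add_two_le [Fintype α] [Fintype β]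
    (hc : IsLocatingColoring (rookGraph α β) c)
    (h : 2 * Fintype.card α ≤ Fintype.card β)
    (hcount : Fintype.card β + 2 ≤ Fintype.card α * (Fintype.card α - 1)) :
    Fintype.card β + 2 ≤ k := by
  have hα : 2 ≤ Fintype.card α := by
    by_contra! hα
    interval_cases Fintype.card α <;> omega
  have : Nonempty α := Fintype.card_pos_iff.1 (by omega)
  have : Nonempty β := Fintype.card_pos_iff.1 (by omega)
  have := hc.card_le
  have := hc.ne_card hα
  by_contra! hk
  have hk : k = Fintype.card β + 1 := by omega
  choose f hf using fun i => (hc.injective_row i).exists_range_eq_compl_singleton (by simp [hk])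
  have := hc.card_mul_pred_le hf (hc.injective_of_range_eq hf (by omega))
  omega

end Rook

open Fin.NatCast in
lemma Fin.natCast_inj_of_lt {p s t : ℕ} [NeZero p] (hs : s < p) (ht : t < p) :
    (s : Fin p) = t ↔ s = t := by
  refine ⟨fun h => ?_, congrArg _⟩
  simpa [Nat.mod_eq_of_lt hs, Nat.mod_eq_of_lt ht] using congrArg Fin.val h

section ShiftColoring

open Fin.CommRing

def shiftColoring (m n : ℕ) : Fin m × Fin n → Fin (n + 2) :=
  fun p => ((p.2 : ℕ) : Fin (n + 2)) + 2 * ((p.1 : ℕ) : Fin (n + 2))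

variable {m n : ℕ}

lemma two_mul_natCast_inj (h : 2 * m ≤ n) {a b : Fin m}
    (hab : 2 * ((a : ℕ) : Fin (n + 2)) = 2 * ((b : ℕ) : Fin (n + 2))) : a = b := by
  have := (Fin.natCast_inj_of_lt (p := n + 2) (s := 2 * a) (t := 2 * b) (by omega) (by omega)).1
    (by push_cast; exact hab)
  omega

lemma two_mul_natCast_ne_add_one (h : 2 * m ≤ n) (a b : Fin m) :
    2 * ((a : ℕ) : Fin (n + 2)) ≠ 2 * ((b : ℕ) : Fin (n + 2)) + 1 := fun hab => by
  have := (Fin.natCast_inj_of_lt (p := n + 2) (s := 2 * a) (t := 2 * b + 1) (by omega)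
    (by omega)).1 (by push_cast; exact hab)
  omega

/-- The two colors missing from row `i` are the ones column indices `n` and `n + 1` would get. -/
lemma exists_shiftColoring_eq_iff {i : Fin m} {y : Fin (n + 2)} :
    (∃ j, shiftColoring m n (i, j) = y) ↔
      y ≠ n + 2 * ((i : ℕ) : Fin (n + 2)) ∧ y ≠ n + 1 + 2 * ((i : ℕ) : Fin (n + 2)) := by
  constructor
  · rintro ⟨j, rfl⟩
    have hj := j.2
    constructor <;> intro h
    · have := (Fin.natCast_inj_of_lt (p := n + 2) (s := j) (t := n) (by omega) (by omega)).1
        (by linear_combination (norm := skip) h; simp [shiftColoring]; ring)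
      omega
    · have := (Fin.natCast_inj_of_lt (p := n + 2) (s := j) (t := n + 1) (by omega) (by omega)).1
        (by push_cast; linear_combination (norm := skip) h; simp [shiftColoring]; ring)
      omega
  · rintro ⟨hy₀, hy₁⟩
    set z := y - 2 * ((i : ℕ) : Fin (n + 2)) with hz_def
    have hz : ((z : ℕ) : Fin (n + 2)) = z := Fin.cast_val_eq_self z
    have hzn : (z : ℕ) < n := by
      have : (z : ℕ) ≠ n := fun h => hy₀ (by rw [h] at hz; linear_combination -hz - hz_def)
      have : (z : ℕ) ≠ n + 1 := fun h => hy₁ (by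
        rw [h] at hz
        push_cast at hz
        linear_combination -hz - hz_def)
      omega
    refine ⟨⟨z, hzn⟩, ?_⟩
    simp only [shiftColoring, hz, z]
    ring

lemma shiftColoring_injective_row (i : Fin m) :
    Function.Injective fun j => shiftColoring m n (i, j) := fun j j' hjj' => by
  have := j.2
  have := j'.2
  exact Fin.ext ((Fin.natCast_inj_of_lt (p := n + 2) (by omega) (by omega)).1
    (by simpa [shiftColoring] using hjj'))

lemma shiftColoring_injective_col (h : 2 * m ≤ n) (j : Fin n) :
    Function.Injective fun i => shiftColoring m n (i, j) := fun a b hab =>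
  two_mul_natCast_inj h (by simpa [shiftColoring] using hab)

lemma exists_shiftColoring_eq_of_ne (h : 2 * m ≤ n) {i i' : Fin m} (hi : i' ≠ i)
    {y : Fin (n + 2)}
    (hy : y = n + 2 * ((i : ℕ) : Fin (n + 2)) ∨ y = n + 1 + 2 * ((i : ℕ) : Fin (n + 2))) :
    ∃ j, shiftColoring m n (i', j) = y := by
  rw [exists_shiftColoring_eq_iff]
  rcases hy with rfl | rfl <;> refine ⟨fun h' => ?_, fun h' => ?_⟩
  · exact hi (two_mul_natCast_inj h (by linear_combination -h'))
  · exact two_mul_natCast_ne_add_one h i i' (by linear_combination h')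
  · exact two_mul_natCast_ne_add_one h i' i (by linear_combination -h')
  · exact hi (two_mul_natCast_inj h (by linear_combination -h'))

lemma shiftColoring_surjective (hm : 2 ≤ m) (h : 2 * m ≤ n) :
    Function.Surjective (shiftColoring m n) := by
  intro y
  by_cases hy : ∃ j, shiftColoring m n (⟨0, by omega⟩, j) = y
  · obtain ⟨j, hj⟩ := hy
    exact ⟨_, hj⟩
  · rw [exists_shiftColoring_eq_iff, not_and_or, not_not, not_not] at hy
    obtain ⟨j, hj⟩ := exists_shiftColoring_eq_of_ne h (i' := ⟨1, by omega⟩) (by simp) hy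
    exact ⟨_, hj⟩

lemma shiftColoring_ne_of_eq (h : 2 * m ≤ n) {i a b : Fin m} {j : Fin n}
    (ha : shiftColoring m n (a, j) = n + 2 * ((i : ℕ) : Fin (n + 2))) :
    shiftColoring m n (b, j) ≠ n + 1 + 2 * ((i : ℕ) : Fin (n + 2)) := fun hb =>
  two_mul_natCast_ne_add_one h b a (by
    simp only [shiftColoring] at ha hb
    linear_combination hb - ha)

lemma shiftColoring_isLocatingColoring (hm : 2 ≤ m) (h : 2 * m ≤ n) :
    IsLocatingColoring (rookGraph (Fin m) (Fin n)) (shiftColoring m n) := by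
  refine isLocatingColoring_rookGraph_of_exists_missing (shiftColoring_surjective hm h)
    shiftColoring_injective_row (shiftColoring_injective_col h) fun i j => ?_
  by_cases hcol : ∃ a, shiftColoring m n (a, j) = n + 2 * ((i : ℕ) : Fin (n + 2))
  · obtain ⟨a, ha⟩ := hcol
    exact ⟨_, fun j' hj' => (exists_shiftColoring_eq_iff.1 ⟨j', hj'⟩).2 rfl,
      fun b => shiftColoring_ne_of_eq h ha,
      fun i' hi' => exists_shiftColoring_eq_of_ne h hi' (.inr rfl)⟩
  · rw [not_exists] at hcol
    exact ⟨_, fun j' hj' => (exists_shiftColoring_eq_iff.1 ⟨j', hj'⟩).1 rfl, hcol,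
      fun i' hi' => exists_shiftColoring_eq_of_ne h hi' (.inl rfl)⟩

end ShiftColoring

theorem stmt12_general (m n m₀ : ℕ) (hm : 2 ≤ m)
    (hm₀ : IsGreatest {k : ℕ | k * (k - 1) - 1 ≤ n} m₀)
    (h₁ : m₀ + 1 ≤ m) (h₂ : 2 * m ≤ n) :
    locatingChromaticNumber
      ((⊤ : SimpleGraph (Fin m)) □ (⊤ : SimpleGraph (Fin n))) = n + 2 := by
  have hcount : n + 2 ≤ m * (m - 1) := by
    by_contra! h
    have := hm₀.2 (show m * (m - 1) - 1 ≤ n by omega)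
    omega
  have hupper := shiftColoring_isLocatingColoring hm h₂
  refine le_antisymm (Nat.sInf_le ⟨_, hupper⟩) (le_csInf ⟨_, _, hupper⟩ ?_)
  rintro k ⟨c, hc⟩
  simpa using hc.card_add_two_le (by simpa using h₂) (by simpa using hcount)

/-- With `m_0 = max {k : k(k-1) - 1 ≤ n}`, if `2 ≤ m ≤ n`, `n ≥ 3`
and `m_0 + 1 ≤ m ≤ n / 2`, then `χ_L(K_m □ K_n) = n + 2`. -/
theorem stmt12 (m n m₀ : ℕ) (hm : 2 ≤ m) (hmn : m ≤ n) (hn : 3 ≤ n)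
    (hm₀ : IsGreatest {k : ℕ | k * (k - 1) - 1 ≤ n} m₀)
    (h₁ : m₀ + 1 ≤ m) (h₂ : 2 * m ≤ n) :
    locatingChromaticNumber
      ((⊤ : SimpleGraph (Fin m)) □ (⊤ : SimpleGraph (Fin n))) = n + 2 :=
  stmt12_general m n m₀ hm hm₀ h₁ h₂
end

section
/- Let m and n be integers with 4 ≤ m ≤ n and n ≥ 3. If K_m □ K_n admits a locating (n+1)-coloring, then m(m−1) ≤ n + 1. -/
open SimpleGraph Finset

private abbrev KG (m n : ℕ) : SimpleGraph (Fin m × Fin n) :=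
  (⊤ : SimpleGraph (Fin m)) □ (⊤ : SimpleGraph (Fin n))

private lemma kg_adj {m n : ℕ} {u v : Fin m × Fin n} :
    (KG m n).Adj u v ↔ (u.1 ≠ v.1 ∧ u.2 = v.2) ∨ (u.2 ≠ v.2 ∧ u.1 = v.1) := by
  simp [boxProd_adj]

private lemma kg_not_adj {m n : ℕ} {u v : Fin m × Fin n} (hne : u ≠ v)
    (hnadj : ¬ (KG m n).Adj u v) : u.1 ≠ v.1 ∧ u.2 ≠ v.2 := by
  constructor
  · intro h
    have h2 : u.2 ≠ v.2 := fun h2 => hne (Prod.ext h h2)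
    exact hnadj (kg_adj.mpr (Or.inr ⟨h2, h⟩))
  · intro h
    have h1 : u.1 ≠ v.1 := fun h1 => hne (Prod.ext h1 h)
    exact hnadj (kg_adj.mpr (Or.inl ⟨h1, h⟩))

private lemma kg_dist_two {m n : ℕ} {u v : Fin m × Fin n} (hne : u ≠ v)
    (hnadj : ¬ (KG m n).Adj u v) : (KG m n).dist u v = 2 := by
  obtain ⟨h1, h2⟩ := kg_not_adj hne hnadj
  have ha : (KG m n).Adj u (u.1, v.2) := kg_adj.mpr (Or.inr ⟨h2, rfl⟩)
  have hb : (KG m n).Adj (u.1, v.2) v := kg_adj.mpr (Or.inl ⟨h1, rfl⟩)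
  have hle : (KG m n).dist u v ≤ 2 := by
    have := SimpleGraph.dist_le (Walk.cons ha (Walk.cons hb Walk.nil))
    simpa using this
  have hr : (KG m n).Reachable u v := ⟨Walk.cons ha (Walk.cons hb Walk.nil)⟩
  have hpos : 0 < (KG m n).dist u v := hr.pos_dist_of_ne hne
  have hne1 : (KG m n).dist u v ≠ 1 := fun h => hnadj (dist_eq_one_iff_adj.mp h)
  omega

private lemma kg_reachable {m n : ℕ} (u v : Fin m × Fin n) :
    (KG m n).Reachable u v := by
  by_cases he : u = v
  · exact he ▸ Reachable.refl u
  by_cases ha : (KG m n).Adj u v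
  · exact ha.reachable
  obtain ⟨h1, h2⟩ := kg_not_adj he ha
  exact Reachable.trans (kg_adj.mpr (Or.inr ⟨h2, rfl⟩) : (KG m n).Adj u (u.1, v.2)).reachable
    ((kg_adj.mpr (Or.inl ⟨h1, rfl⟩) : (KG m n).Adj (u.1, v.2) v)).reachable

open Classical in
private lemma kg_code_val {m n k : ℕ}
    (c : Fin m × Fin n → Fin k) (hs : Function.Surjective c)
    (v : Fin m × Fin n) (i : Fin k) :
    colorCode (KG m n) c v i =
      if c v = i then 0 else if ∃ w, (KG m n).Adj v w ∧ c w = i then 1 else 2 := by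
  obtain ⟨x, hx⟩ := hs i
  have hxS : x ∈ (c ⁻¹' {i}) := hx
  have hSne : ((KG m n).dist v '' (c ⁻¹' {i})).Nonempty := ⟨_, ⟨x, hxS, rfl⟩⟩
  unfold colorCode setDist
  by_cases h0 : c v = i
  · rw [if_pos h0]
    exact Nat.sInf_eq_zero.mpr (Or.inl ⟨v, h0, SimpleGraph.dist_self⟩)
  · rw [if_neg h0]
    have hvS : ∀ y ∈ (c ⁻¹' {i}), y ≠ v := by
      intro y hy hvy; exact h0 (hvy ▸ hy)
    have hpos : ∀ d ∈ (KG m n).dist v '' (c ⁻¹' {i}), 1 ≤ d := by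
      rintro d ⟨y, hy, rfl⟩
      exact (kg_reachable v y).pos_dist_of_ne (fun h => (hvS y hy) h.symm)
    by_cases h1 : ∃ w, (KG m n).Adj v w ∧ c w = i
    · rw [if_pos h1]
      obtain ⟨w, hw, hcw⟩ := h1
      have : (KG m n).dist v w = 1 := dist_eq_one_iff_adj.mpr hw
      refine le_antisymm (this ▸ Nat.sInf_le ⟨w, hcw, rfl⟩) (le_csInf hSne hpos)
    · rw [if_neg h1]
      have hall : ∀ d ∈ (KG m n).dist v '' (c ⁻¹' {i}), d = 2 := by
        rintro d ⟨y, hy, rfl⟩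
        refine kg_dist_two (fun h => hvS y hy h.symm) (fun ha => h1 ⟨y, ha, hy⟩)
      refine le_antisymm (Nat.sInf_le ?_) (le_csInf hSne (fun d hd => (hall d hd).ge))
      obtain ⟨d, hd⟩ := hSne
      exact (hall d hd) ▸ hd

private lemma nat_prod_ineq (a b : ℕ) (ha : 1 ≤ a) (hb : 1 ≤ b) : a + b - 1 ≤ a * b := by
  obtain ⟨a', rfl⟩ := Nat.exists_eq_add_of_le ha
  obtain ⟨b', rfl⟩ := Nat.exists_eq_add_of_le hb
  have : (1+a')*(1+b') = 1 + a' + b' + a'*b' := by ring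
  omega

/-- For `4 ≤ m ≤ n`, `n ≥ 3`, if `K_m □ K_n` admits a locating
`(n+1)`-coloring, then `m(m-1) ≤ n + 1`. -/
theorem stmt13 (m n : ℕ) (hm : 4 ≤ m) (hmn : m ≤ n) (hn : 3 ≤ n)
    (h : ∃ c : Fin m × Fin n → Fin (n + 1),
      IsLocatingColoring
        ((⊤ : SimpleGraph (Fin m)) □ (⊤ : SimpleGraph (Fin n))) c) :
    m * (m - 1) ≤ n + 1 := by
  classical
  obtain ⟨c, hs, hp, hinj⟩ := h
  -- row and column injectivity
  have hrow : ∀ (r : Fin m) (j j' : Fin n), c (r, j) = c (r, j') → j = j' := by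
    intro r j j' hc
    by_contra hne
    exact hp (r,j) (r,j') (kg_adj.mpr (Or.inr ⟨by simpa using hne, rfl⟩)) hc
  have hcol : ∀ (j : Fin n) (i i' : Fin m), c (i, j) = c (i', j) → i = i' := by
    intro j i i' hc
    by_contra hne
    exact hp (i,j) (i',j) (kg_adj.mpr (Or.inl ⟨by simpa using hne, rfl⟩)) hc
  -- the missing color of each row
  have hμex : ∀ r : Fin m, ∃ a : Fin (n+1),
      ((univ : Finset (Fin n)).image (fun j => c (r,j)))ᶜ = {a} := by
    intro r
    apply Finset.card_eq_one.mp
    rw [Finset.card_compl, Finset.card_image_of_injective _ (fun j j' => hrow r j j')]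
    simp
  choose μ hμ using hμex
  have hμ1 : ∀ (r : Fin m) (j : Fin n), c (r, j) ≠ μ r := by
    intro r j hc
    have h2 : μ r ∈ ((univ : Finset (Fin n)).image (fun j => c (r,j)))ᶜ := by
      rw [hμ r]; exact mem_singleton_self _
    rw [Finset.mem_compl] at h2
    exact h2 (mem_image.mpr ⟨j, mem_univ _, hc⟩)
  have hμ2 : ∀ (r : Fin m) (a : Fin (n+1)), a ≠ μ r → ∃ j, c (r, j) = a := by
    intro r a ha
    have h2 : a ∉ ((univ : Finset (Fin n)).image (fun j => c (r,j)))ᶜ := by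
      rw [hμ r]; simpa using ha
    rw [Finset.mem_compl, not_not] at h2
    obtain ⟨j, _, hj⟩ := Finset.mem_image.mp h2
    exact ⟨j, hj⟩
  -- code of a "plain" vertex (the missing color of its row appears in its column)
  have code_plain : ∀ v : Fin m × Fin n, (∃ i, c (i, v.2) = μ v.1) → ∀ i,
      colorCode (KG m n) c v i = if c v = i then 0 else 1 := by
    intro v hv i
    rw [kg_code_val c hs]
    by_cases h0 : c v = i
    · simp [h0]
    · rw [if_neg h0, if_neg h0, if_pos]
      by_cases hi : i = μ v.1
      · obtain ⟨i0, hi0⟩ := hv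
        refine ⟨(i0, v.2), kg_adj.mpr (Or.inl ⟨?_, rfl⟩), by rw [hi0, hi]⟩
        intro hiv
        exact hμ1 i0 v.2 (hi0.trans (congrArg μ hiv))
      · obtain ⟨j, hj⟩ := hμ2 v.1 i hi
        refine ⟨(v.1, j), kg_adj.mpr (Or.inr ⟨?_, rfl⟩), hj⟩
        intro hjv
        exact h0 ((congrArg c (Prod.ext rfl hjv : v = (v.1, j))).trans hj)
  -- code of a non-plain vertex
  have code_notplain : ∀ v : Fin m × Fin n, ¬ (∃ i, c (i, v.2) = μ v.1) → ∀ i,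
      colorCode (KG m n) c v i =
        if c v = i then 0 else if i = μ v.1 then 2 else 1 := by
    intro v hv i
    rw [kg_code_val c hs]
    by_cases h0 : c v = i
    · simp [h0]
    · rw [if_neg h0, if_neg h0]
      by_cases hi : i = μ v.1
      · rw [if_pos hi, if_neg]
        rintro ⟨w, hw, hcw⟩
        rcases kg_adj.mp hw with ⟨h1, h2⟩ | ⟨h1, h2⟩
        · exact hv ⟨w.1, by rw [h2, Prod.mk.eta, hcw, hi]⟩
        · exact hμ1 v.1 w.2 (((congrArg c (Prod.ext h2 rfl : (v.1, w.2) = w)).trans hcw).trans hi)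
      · rw [if_neg hi, if_pos]
        obtain ⟨j, hj⟩ := hμ2 v.1 i hi
        refine ⟨(v.1, j), kg_adj.mpr (Or.inr ⟨?_, rfl⟩), hj⟩
        intro hjv
        exact h0 ((congrArg c (Prod.ext rfl hjv : v = (v.1, j))).trans hj)
  -- L1: two "plain" vertices with the same color are equal
  have L1 : ∀ u v : Fin m × Fin n, (∃ i, c (i, u.2) = μ u.1) → (∃ i, c (i, v.2) = μ v.1) →
      c u = c v → u = v := by
    intro u v hu hv hc
    apply hinj
    funext i
    rw [show colorCode ((⊤ : SimpleGraph (Fin m)) □ (⊤ : SimpleGraph (Fin n))) c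
      = colorCode (KG m n) c from rfl, code_plain u hu i, code_plain v hv i, hc]
  -- L2: two non-plain vertices with the same color and same row-missing color are equal
  have L2 : ∀ u v : Fin m × Fin n, ¬(∃ i, c (i, u.2) = μ u.1) → ¬(∃ i, c (i, v.2) = μ v.1) →
      c u = c v → μ u.1 = μ v.1 → u = v := by
    intro u v hu hv hc hμuv
    apply hinj
    funext i
    rw [show colorCode ((⊤ : SimpleGraph (Fin m)) □ (⊤ : SimpleGraph (Fin n))) c
      = colorCode (KG m n) c from rfl, code_notplain u hu i, code_notplain v hv i, hc, hμuv]
  -- t b : the number of rows whose missing color is b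
  set t : Fin (n+1) → ℕ := fun b => (univ.filter (fun r => μ r = b)).card with ht
  have htm : ∀ b, t b ≤ m - 1 := by
    intro b
    obtain ⟨v, hv⟩ := hs b
    have hr : μ v.1 ≠ b := fun hb => hμ1 v.1 v.2 (by rw [Prod.mk.eta, hv, hb])
    have hsub : (univ.filter (fun r => μ r = b)) ⊆ univ.erase v.1 := by
      intro r hr'
      rcases mem_filter.mp hr' with ⟨_, hrb⟩
      exact mem_erase.mpr ⟨fun he => hr (he ▸ hrb), mem_univ _⟩
    calc t b ≤ (univ.erase v.1).card := card_le_card hsub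
      _ = m - 1 := by rw [card_erase_of_mem (mem_univ _), card_univ, Fintype.card_fin]
  -- the number of columns containing color b is m - t b
  have hCols : ∀ b : Fin (n+1),
      ((univ : Finset (Fin n)).filter (fun j => ∃ i, c (i, j) = b)).card = m - t b := by
    intro b
    have himg1 : ((univ : Finset (Fin m × Fin n)).filter (fun v => c v = b)).image Prod.fst
        = univ.filter (fun r => ¬ μ r = b) := by
      ext r
      simp only [mem_image, mem_filter, mem_univ, true_and]
      constructor
      · rintro ⟨v, hv, rfl⟩
        exact fun hb => hμ1 v.1 v.2 (by rw [Prod.mk.eta, hv, hb])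
      · intro hb
        obtain ⟨j, hj⟩ := hμ2 r b (fun h => hb h.symm)
        exact ⟨(r, j), hj, rfl⟩
    have hinj1 : Set.InjOn Prod.fst
        (((univ : Finset (Fin m × Fin n)).filter (fun v => c v = b)) : Set (Fin m × Fin n)) := by
      intro v hv w hw h1
      simp only [coe_filter, Set.mem_setOf_eq] at hv hw
      have e1 : c (v.1, v.2) = b := by rw [Prod.mk.eta]; exact hv.2
      have e2 : c (v.1, w.2) = b := by rw [h1, Prod.mk.eta]; exact hw.2
      exact Prod.ext h1 (hrow v.1 v.2 w.2 (e1.trans e2.symm))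
    have hV : ((univ : Finset (Fin m × Fin n)).filter (fun v => c v = b)).card = m - t b := by
      rw [← Finset.card_image_of_injOn hinj1, himg1]
      have hpn := Finset.card_filter_add_card_filter_not
        (s := (univ : Finset (Fin m))) (p := fun r => μ r = b)
      rw [card_univ, Fintype.card_fin] at hpn
      have : t b = (univ.filter (fun r => μ r = b)).card := rfl
      omega
    have himg2 : ((univ : Finset (Fin m × Fin n)).filter (fun v => c v = b)).image Prod.snd
        = univ.filter (fun j => ∃ i, c (i, j) = b) := by
      ext j
      simp only [mem_image, mem_filter, mem_univ, true_and]
      constructor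
      · rintro ⟨v, hv, rfl⟩
        exact ⟨v.1, by rw [Prod.mk.eta]; exact hv⟩
      · rintro ⟨i, hi⟩
        exact ⟨(i, j), hi, rfl⟩
    have hinj2 : Set.InjOn Prod.snd
        (((univ : Finset (Fin m × Fin n)).filter (fun v => c v = b)) : Set (Fin m × Fin n)) := by
      intro v hv w hw h2
      simp only [coe_filter, Set.mem_setOf_eq] at hv hw
      have e1 : c (v.1, v.2) = b := by rw [Prod.mk.eta]; exact hv.2
      have e2 : c (w.1, v.2) = b := by rw [h2, Prod.mk.eta]; exact hw.2
      exact Prod.ext (hcol v.2 v.1 w.1 (e1.trans e2.symm)) h2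
    rw [← himg2, Finset.card_image_of_injOn hinj2, hV]
  -- number of plain vertices is at most n+1
  have hPle : ((univ : Finset (Fin m × Fin n)).filter
      (fun v => ∃ i, c (i, v.2) = μ v.1)).card ≤ n + 1 := by
    have hinjP : Set.InjOn c
        (((univ : Finset (Fin m × Fin n)).filter (fun v => ∃ i, c (i, v.2) = μ v.1))
          : Set (Fin m × Fin n)) := by
      intro u hu v hv hc
      simp only [coe_filter, Set.mem_setOf_eq] at hu hv
      exact L1 u v hu.2 hv.2 hc
    calc ((univ : Finset (Fin m × Fin n)).filter (fun v => ∃ i, c (i, v.2) = μ v.1)).card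
        ≤ (univ : Finset (Fin (n+1))).card :=
          Finset.card_le_card_of_injOn c (fun _ _ => mem_univ _) hinjP
      _ = n + 1 := by rw [card_univ, Fintype.card_fin]
  -- number of plain vertices as a sum over rows
  have hfib : ∀ r : Fin m,
      (((univ : Finset (Fin m × Fin n)).filter (fun v => ∃ i, c (i, v.2) = μ v.1)).filter
        (fun v => v.1 = r)).card = m - t (μ r) := by
    intro r
    rw [← hCols (μ r)]
    apply Finset.card_bij (fun v _ => v.2)
    · intro v hv
      simp only [mem_filter, mem_univ, true_and] at hv ⊢
      obtain ⟨⟨i, hi⟩, hr⟩ := hv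
      exact ⟨i, by rw [← hr]; exact hi⟩
    · intro v hv w hw h2
      simp only [mem_filter, mem_univ, true_and] at hv hw
      exact Prod.ext (hv.2.trans hw.2.symm) h2
    · intro j hj
      simp only [mem_filter, mem_univ, true_and] at hj
      obtain ⟨i0, hi0⟩ := hj
      exact ⟨(r, j), mem_filter.mpr ⟨mem_filter.mpr ⟨mem_univ _, ⟨i0, hi0⟩⟩, rfl⟩, rfl⟩
  have hPsum : ((univ : Finset (Fin m × Fin n)).filter
      (fun v => ∃ i, c (i, v.2) = μ v.1)).card = ∑ r : Fin m, (m - t (μ r)) := by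
    rw [Finset.card_eq_sum_card_fiberwise
      (f := Prod.fst) (t := (univ : Finset (Fin m))) (fun _ _ => mem_univ _)]
    exact Finset.sum_congr rfl (fun r _ => hfib r)
  by_cases hcase : ∀ b, t b ≤ 1
  · -- every missing color is missed by at most one row
    calc m * (m - 1) = ∑ _r : Fin m, (m - 1) := by
          rw [Finset.sum_const, card_univ, Fintype.card_fin, smul_eq_mul]
      _ ≤ ∑ r : Fin m, (m - t (μ r)) :=
          Finset.sum_le_sum (fun r _ => Nat.sub_le_sub_left (hcase (μ r)) m)
      _ ≤ n + 1 := by rw [← hPsum]; exact hPle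
  · exfalso
    push_neg at hcase
    obtain ⟨b0, hb0⟩ := hcase
    -- the set Q of non-plain vertices in rows missing b0
    have hQle : ((univ : Finset (Fin m × Fin n)).filter
        (fun v => μ v.1 = b0 ∧ ¬ ∃ i, c (i, v.2) = μ v.1)).card ≤ n := by
      have hmaps : ∀ v ∈ (univ : Finset (Fin m × Fin n)).filter
          (fun v => μ v.1 = b0 ∧ ¬ ∃ i, c (i, v.2) = μ v.1),
          c v ∈ (univ : Finset (Fin (n+1))).erase b0 := by
        intro v hv
        rcases mem_filter.mp hv with ⟨_, hb, _⟩
        refine mem_erase.mpr ⟨fun he => ?_, mem_univ _⟩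
        exact hμ1 v.1 v.2 (by rw [Prod.mk.eta, he, hb])
      have hinjQ : Set.InjOn c
          (((univ : Finset (Fin m × Fin n)).filter
            (fun v => μ v.1 = b0 ∧ ¬ ∃ i, c (i, v.2) = μ v.1)) : Set (Fin m × Fin n)) := by
        intro u hu v hv hc
        simp only [coe_filter, Set.mem_setOf_eq] at hu hv
        exact L2 u v hu.2.2 hv.2.2 hc (hu.2.1.trans hv.2.1.symm)
      calc ((univ : Finset (Fin m × Fin n)).filter
          (fun v => μ v.1 = b0 ∧ ¬ ∃ i, c (i, v.2) = μ v.1)).card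
          ≤ ((univ : Finset (Fin (n+1))).erase b0).card :=
            Finset.card_le_card_of_injOn c hmaps hinjQ
        _ = n := by rw [card_erase_of_mem (mem_univ _), card_univ, Fintype.card_fin]; rfl
    -- lower bound for Q, row by row
    have hnonplaincols : ((univ : Finset (Fin n)).filter
        (fun j => ¬ ∃ i, c (i, j) = b0)).card = n - (m - t b0) := by
      have hpn := Finset.card_filter_add_card_filter_not
        (s := (univ : Finset (Fin n))) (p := fun j => ∃ i, c (i, j) = b0)
      rw [card_univ, Fintype.card_fin, hCols b0] at hpn
      omega
    have hQfib : ∀ r ∈ (univ : Finset (Fin m)).filter (fun r => μ r = b0),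
        n - (m - t b0) ≤ (((univ : Finset (Fin m × Fin n)).filter
          (fun v => μ v.1 = b0 ∧ ¬ ∃ i, c (i, v.2) = μ v.1)).filter
            (fun v => v.1 = r)).card := by
      intro r hr
      rcases mem_filter.mp hr with ⟨_, hrb⟩
      rw [← hnonplaincols]
      apply Finset.card_le_card_of_injOn (fun j => (r, j))
      · intro j hj
        rcases mem_filter.mp hj with ⟨_, hj2⟩
        refine mem_filter.mpr ⟨mem_filter.mpr ⟨mem_univ _, hrb, ?_⟩, rfl⟩
        rintro ⟨i, hi⟩
        exact hj2 ⟨i, by rw [hi, hrb]⟩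
      · intro j _ j' _ he
        exact congrArg Prod.snd he
    have hQlower : t b0 * (n - (m - t b0))
        ≤ ((univ : Finset (Fin m × Fin n)).filter
          (fun v => μ v.1 = b0 ∧ ¬ ∃ i, c (i, v.2) = μ v.1)).card := by
      rw [Finset.card_eq_sum_card_fiberwise
        (f := Prod.fst) (t := (univ : Finset (Fin m))) (fun _ _ => mem_univ _)]
      calc t b0 * (n - (m - t b0))
          = ∑ _r ∈ (univ : Finset (Fin m)).filter (fun r => μ r = b0), (n - (m - t b0)) := by
            rw [Finset.sum_const, smul_eq_mul]
        _ ≤ ∑ r ∈ (univ : Finset (Fin m)).filter (fun r => μ r = b0),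
            (((univ : Finset (Fin m × Fin n)).filter
              (fun v => μ v.1 = b0 ∧ ¬ ∃ i, c (i, v.2) = μ v.1)).filter
                (fun v => v.1 = r)).card := Finset.sum_le_sum hQfib
        _ ≤ ∑ r : Fin m, (((univ : Finset (Fin m × Fin n)).filter
              (fun v => μ v.1 = b0 ∧ ¬ ∃ i, c (i, v.2) = μ v.1)).filter
                (fun v => v.1 = r)).card :=
            Finset.sum_le_sum_of_subset (filter_subset _ _)
    have hB : t b0 * (n - (m - t b0)) ≤ n := le_trans hQlower hQle
    have h2n : 2 * (n - (m - t b0)) ≤ n :=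
      le_trans (Nat.mul_le_mul_right _ hb0) hB
    have hmt : m - t b0 ≤ m - 2 := Nat.sub_le_sub_left hb0 m
    have hn2m : n + 4 ≤ 2 * m := by omega
    -- grouping the plain-vertex count by missing color
    have hpos : ∀ b ∈ (univ : Finset (Fin m)).image μ, 1 ≤ t b := by
      intro b hb
      obtain ⟨r, _, hr⟩ := mem_image.mp hb
      exact card_pos.mpr ⟨r, mem_filter.mpr ⟨mem_univ _, hr⟩⟩
    have hsum_comp : ∑ r : Fin m, (m - t (μ r))
        = ∑ b ∈ (univ : Finset (Fin m)).image μ, t b * (m - t b) := by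
      rw [Finset.sum_comp (fun b => m - t b) μ]
      simp only [ht, smul_eq_mul]
    have hA : ∑ b ∈ (univ : Finset (Fin m)).image μ, t b * (m - t b) ≤ n + 1 := by
      rw [← hsum_comp, ← hPsum]; exact hPle
    have hsumt : ∑ b ∈ (univ : Finset (Fin m)).image μ, t b = m := by
      have hh := Finset.card_eq_sum_card_fiberwise
        (f := μ) (s := (univ : Finset (Fin m))) (t := (univ : Finset (Fin m)).image μ)
        (fun x _ => mem_image_of_mem μ (mem_univ x))
      rw [card_univ, Fintype.card_fin] at hh
      exact hh.symm
    have hterm : ∀ b ∈ (univ : Finset (Fin m)).image μ, m - 1 ≤ t b * (m - t b) := by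
      intro b hb
      have h1 := hpos b hb
      have h2 := htm b
      have h3 : 1 ≤ m - t b := by omega
      calc m - 1 = t b + (m - t b) - 1 := by omega
        _ ≤ t b * (m - t b) := nat_prod_ineq _ _ h1 h3
    have hUcard2 : ((univ : Finset (Fin m)).image μ).card ≤ 2 := by
      by_contra hc3
      push_neg at hc3
      have hbig : ((univ : Finset (Fin m)).image μ).card * (m - 1) ≤ n + 1 := by
        calc ((univ : Finset (Fin m)).image μ).card * (m - 1)
            = ∑ _b ∈ (univ : Finset (Fin m)).image μ, (m - 1) := by
              rw [Finset.sum_const, smul_eq_mul]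
          _ ≤ ∑ b ∈ (univ : Finset (Fin m)).image μ, t b * (m - t b) :=
              Finset.sum_le_sum hterm
          _ ≤ n + 1 := hA
      have h3m : 3 * (m - 1) ≤ n + 1 :=
        le_trans (Nat.mul_le_mul_right _ hc3) hbig
      omega
    have hUne : ((univ : Finset (Fin m)).image μ).Nonempty :=
      ⟨μ ⟨0, by omega⟩, mem_image_of_mem μ (mem_univ _)⟩
    have hU12 : ((univ : Finset (Fin m)).image μ).card = 1
        ∨ ((univ : Finset (Fin m)).image μ).card = 2 := by
      have := card_pos.mpr hUne
      omega
    rcases hU12 with h1 | h2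
    · obtain ⟨b, hb⟩ := card_eq_one.mp h1
      rw [hb, Finset.sum_singleton] at hsumt
      have := htm b
      omega
    · obtain ⟨b1, b2, hne, hb⟩ := card_eq_two.mp h2
      have hb1 : b1 ∈ (univ : Finset (Fin m)).image μ := by rw [hb]; simp
      have hb2 : b2 ∈ (univ : Finset (Fin m)).image μ := by rw [hb]; simp
      have h11 := hpos b1 hb1
      have h12 := hpos b2 hb2
      rw [hb, Finset.sum_pair hne] at hsumt hA
      have e1 : m - t b1 = t b2 := by omega
      have e2 : m - t b2 = t b1 := by omega
      have hprod : t b1 + t b2 - 1 ≤ t b1 * t b2 := nat_prod_ineq _ _ h11 h12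
      have hfinal : 2 * (m - 1) ≤ n + 1 := by
        calc 2 * (m - 1) ≤ 2 * (t b1 * t b2) := by
              apply Nat.mul_le_mul_left
              omega
          _ = t b1 * (m - t b1) + t b2 * (m - t b2) := by rw [e1, e2]; ring
          _ ≤ n + 1 := hA
      omega
end

section
/- Let m and n be integers with 2 ≤ m ≤ n/2 and n ≥ 3. Then the locating chromatic number of K_m □ K_n satisfies χ_L(K_m □ K_n) ≤ n + 2. -/
open SimpleGraph

private lemma modCase (M a : ℕ) (hM : 0 < M) (h : a < 3 * M) :
    (a % M = a ∨ a % M + M = a ∨ a % M + 2 * M = a) ∧ a % M < M := by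
  refine ⟨?_, Nat.mod_lt _ hM⟩
  rcases lt_or_ge a M with h1 | h1
  · exact Or.inl (Nat.mod_eq_of_lt h1)
  rcases lt_or_ge a (2 * M) with h2 | h2
  · refine Or.inr (Or.inl ?_)
    rw [Nat.mod_eq_sub_mod h1, Nat.mod_eq_of_lt (by omega)]; omega
  · refine Or.inr (Or.inr ?_)
    rw [Nat.mod_eq_sub_mod h1, Nat.mod_eq_sub_mod (by omega), Nat.mod_eq_of_lt (by omega)]
    omega

section KK

variable {m n : ℕ}

private lemma kk_adj (u v : Fin m × Fin n) :
    ((⊤ : SimpleGraph (Fin m)) □ (⊤ : SimpleGraph (Fin n))).Adj u v ↔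
      ((u.1 ≠ v.1 ∧ u.2 = v.2) ∨ (u.2 ≠ v.2 ∧ u.1 = v.1)) := by
  simp [SimpleGraph.boxProd_adj]

private lemma kk_dist_two (u v : Fin m × Fin n)
    (hne : u ≠ v) (hadj : ¬ ((⊤ : SimpleGraph (Fin m)) □ (⊤ : SimpleGraph (Fin n))).Adj u v) :
    ((⊤ : SimpleGraph (Fin m)) □ (⊤ : SimpleGraph (Fin n))).dist u v = 2 := by
  set G := ((⊤ : SimpleGraph (Fin m)) □ (⊤ : SimpleGraph (Fin n))) with hG
  have h1 : u.1 ≠ v.1 ∧ u.2 ≠ v.2 := by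
    rw [kk_adj] at hadj
    constructor
    · intro h
      by_cases h2 : u.2 = v.2
      · exact hne (Prod.ext h h2)
      · exact hadj (Or.inr ⟨h2, h⟩)
    · intro h
      by_cases h2 : u.1 = v.1
      · exact hne (Prod.ext h2 h)
      · exact hadj (Or.inl ⟨h2, h⟩)
  have a1 : G.Adj u (u.1, v.2) := by rw [kk_adj]; right; exact ⟨h1.2, rfl⟩
  have a2 : G.Adj (u.1, v.2) v := by rw [kk_adj]; left; exact ⟨h1.1, rfl⟩
  have hle := SimpleGraph.dist_le (SimpleGraph.Walk.cons a1 (SimpleGraph.Walk.cons a2 SimpleGraph.Walk.nil))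
  simp only [SimpleGraph.Walk.length_cons, SimpleGraph.Walk.length_nil] at hle
  have hr : G.Reachable u v :=
    ⟨SimpleGraph.Walk.cons a1 (SimpleGraph.Walk.cons a2 SimpleGraph.Walk.nil)⟩
  have h0 : G.dist u v ≠ 0 := fun h => hne (hr.dist_eq_zero_iff.mp h)
  have hone : G.dist u v ≠ 1 := fun h => hadj (SimpleGraph.dist_eq_one_iff_adj.mp h)
  omega

private lemma kk_setDist_mem {S : Set (Fin m × Fin n)} {v : Fin m × Fin n} (h : v ∈ S) :
    setDist ((⊤ : SimpleGraph (Fin m)) □ (⊤ : SimpleGraph (Fin n))) v S = 0 :=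
  Nat.eq_zero_of_le_zero (le_of_le_of_eq (Nat.sInf_le ⟨v, h, rfl⟩) (SimpleGraph.dist_self))

private lemma kk_mem_of_setDist_zero {S : Set (Fin m × Fin n)} {v : Fin m × Fin n}
    (hS : S.Nonempty)
    (h : setDist ((⊤ : SimpleGraph (Fin m)) □ (⊤ : SimpleGraph (Fin n))) v S = 0) : v ∈ S := by
  set G := ((⊤ : SimpleGraph (Fin m)) □ (⊤ : SimpleGraph (Fin n))) with hG
  rw [setDist, Nat.sInf_eq_zero] at h
  rcases h with h | h
  · obtain ⟨w, hwS, hw⟩ := h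
    by_cases heq : v = w
    · exact heq ▸ hwS
    by_cases hadj : G.Adj v w
    · rw [SimpleGraph.dist_eq_one_iff_adj.2 hadj] at hw; omega
    · rw [kk_dist_two v w heq hadj] at hw; omega
  · exact absurd h (Set.Nonempty.ne_empty (hS.image _))


private lemma kk_setDist_le_one {S : Set (Fin m × Fin n)} {v w : Fin m × Fin n}
    (hwS : w ∈ S) (hadj : ((⊤ : SimpleGraph (Fin m)) □ (⊤ : SimpleGraph (Fin n))).Adj v w) :
    setDist ((⊤ : SimpleGraph (Fin m)) □ (⊤ : SimpleGraph (Fin n))) v S ≤ 1 :=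
  le_of_le_of_eq (Nat.sInf_le ⟨w, hwS, rfl⟩) (SimpleGraph.dist_eq_one_iff_adj.2 hadj)

private lemma kk_setDist_two {S : Set (Fin m × Fin n)} {v : Fin m × Fin n}
    (hS : S.Nonempty) (h0 : v ∉ S)
    (h1 : ∀ w ∈ S, ¬ ((⊤ : SimpleGraph (Fin m)) □ (⊤ : SimpleGraph (Fin n))).Adj v w) :
    setDist ((⊤ : SimpleGraph (Fin m)) □ (⊤ : SimpleGraph (Fin n))) v S = 2 := by
  set G := ((⊤ : SimpleGraph (Fin m)) □ (⊤ : SimpleGraph (Fin n))) with hG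
  have key : ∀ w ∈ S, G.dist v w = 2 := by
    intro w hw
    exact kk_dist_two v w (fun h => h0 (h ▸ hw)) (h1 w hw)
  obtain ⟨w, hw⟩ := hS
  refine le_antisymm ?_ ?_
  · exact le_of_le_of_eq (Nat.sInf_le ⟨w, hw, rfl⟩) (key w hw)
  · refine le_csInf ⟨_, w, hw, rfl⟩ ?_
    rintro b ⟨x, hx, rfl⟩
    exact le_of_eq (key x hx).symm

end KK

private def kcol (m n : ℕ) (p : Fin m × Fin n) : Fin (n + 2) :=
  ⟨(2 * p.1.1 + p.2.1) % (n + 2), Nat.mod_lt _ (by omega)⟩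

private lemma kcol_surj (m n : ℕ) (hm : 2 ≤ m) (hn : 3 ≤ n) :
    Function.Surjective (kcol m n) := by
  intro t
  rcases lt_or_ge t.1 n with h | h
  · refine ⟨(⟨0, by omega⟩, ⟨t.1, h⟩), ?_⟩
    apply Fin.ext
    show (2 * 0 + t.1) % (n + 2) = t.1
    rw [Nat.mul_zero, Nat.zero_add, Nat.mod_eq_of_lt (by omega)]
  · have ht := t.isLt
    refine ⟨(⟨1, by omega⟩, ⟨t.1 - 2, by omega⟩), ?_⟩
    apply Fin.ext
    show (2 * 1 + (t.1 - 2)) % (n + 2) = t.1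
    have : 2 * 1 + (t.1 - 2) = t.1 := by omega
    rw [this, Nat.mod_eq_of_lt (by omega)]

private lemma kcol_proper (m n : ℕ) (h₂ : 2 * m ≤ n) (u v : Fin m × Fin n)
    (hadj : ((⊤ : SimpleGraph (Fin m)) □ (⊤ : SimpleGraph (Fin n))).Adj u v) :
    kcol m n u ≠ kcol m n v := by
  intro he
  have he' : (2 * u.1.1 + u.2.1) % (n + 2) = (2 * v.1.1 + v.2.1) % (n + 2) :=
    congrArg Fin.val he
  have b1 := u.1.isLt; have b2 := u.2.isLt; have b3 := v.1.isLt; have b4 := v.2.isLt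
  have m1 := modCase (n + 2) (2 * u.1.1 + u.2.1) (by omega) (by omega)
  have m2 := modCase (n + 2) (2 * v.1.1 + v.2.1) (by omega) (by omega)
  rcases (kk_adj u v).mp hadj with ⟨h1, h2⟩ | ⟨h1, h2⟩
  · have hne : u.1.1 ≠ v.1.1 := fun hh => h1 (Fin.ext hh)
    have heq : u.2.1 = v.2.1 := congrArg Fin.val h2
    omega
  · have hne : u.2.1 ≠ v.2.1 := fun hh => h1 (Fin.ext hh)
    have heq : u.1.1 = v.1.1 := congrArg Fin.val h2
    omega

private lemma kcol_keyD (m n : ℕ) (hm : 2 ≤ m) (h₂ : 2 * m ≤ n) (u : Fin m × Fin n) :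
    ∃ a, a ≤ 1 ∧ ∀ i : Fin m, (2 * i.1 + u.2.1) % (n + 2) ≠ (2 * u.1.1 + n + a) % (n + 2) := by
  by_contra hc
  push_neg at hc
  obtain ⟨i₁, h1⟩ := hc 0 (by omega)
  obtain ⟨i₂, h2⟩ := hc 1 (by omega)
  have b0 := u.1.isLt; have b1 := u.2.isLt; have b2 := i₁.isLt; have b3 := i₂.isLt
  have m1 := modCase (n + 2) (2 * i₁.1 + u.2.1) (by omega) (by omega)
  have m2 := modCase (n + 2) (2 * i₂.1 + u.2.1) (by omega) (by omega)
  have m3 := modCase (n + 2) (2 * u.1.1 + n + 0) (by omega) (by omega)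
  have m4 := modCase (n + 2) (2 * u.1.1 + n + 1) (by omega) (by omega)
  omega


private lemma kcol_inj (m n : ℕ) (hm : 2 ≤ m) (h₂ : 2 * m ≤ n) (hn : 3 ≤ n) :
    Function.Injective
      (colorCode ((⊤ : SimpleGraph (Fin m)) □ (⊤ : SimpleGraph (Fin n))) (kcol m n)) := by
  set G := ((⊤ : SimpleGraph (Fin m)) □ (⊤ : SimpleGraph (Fin n))) with hG
  set c := kcol m n with hc
  have hclass : ∀ t : Fin (n + 2), (c ⁻¹' {t}).Nonempty := by
    intro t
    obtain ⟨p, hp⟩ := kcol_surj m n hm hn t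
    exact ⟨p, hp⟩
  intro u v h
  -- same color
  have hcc : c v = c u := by
    have h0 : colorCode G c u (c u) = 0 := kk_setDist_mem rfl
    have h1 : colorCode G c v (c u) = 0 := by rw [← h]; exact h0
    exact kk_mem_of_setDist_zero (hclass (c u)) h1
  by_contra hne
  have b0 := u.1.isLt; have b1 := u.2.isLt; have b2 := v.1.isLt; have b3 := v.2.isLt
  have hval : (2 * v.1.1 + v.2.1) % (n + 2) = (2 * u.1.1 + u.2.1) % (n + 2) :=
    congrArg Fin.val hcc
  have m1 := modCase (n + 2) (2 * v.1.1 + v.2.1) (by omega) (by omega)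
  have m2 := modCase (n + 2) (2 * u.1.1 + u.2.1) (by omega) (by omega)
  -- rows differ
  have hrow : u.1.1 ≠ v.1.1 := by
    intro hr
    have : u.2.1 = v.2.1 := by omega
    exact hne (Prod.ext (Fin.ext hr.symm ▸ rfl) (Fin.ext this))
  obtain ⟨a, ha1, ha2⟩ := kcol_keyD m n hm h₂ u
  set t : Fin (n + 2) := ⟨(2 * u.1.1 + n + a) % (n + 2), Nat.mod_lt _ (by omega)⟩ with ht
  have mt := modCase (n + 2) (2 * u.1.1 + n + a) (by omega) (by omega)
  -- c u ≠ t
  have hct : c u ≠ t := by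
    intro he
    have he' : (2 * u.1.1 + u.2.1) % (n + 2) = (2 * u.1.1 + n + a) % (n + 2) :=
      congrArg Fin.val he
    omega
  -- colorCode u t = 2
  have hu2 : colorCode G c u t = 2 := by
    refine kk_setDist_two (hclass t) hct ?_
    intro w hw hadj
    have hwv : (2 * w.1.1 + w.2.1) % (n + 2) = (2 * u.1.1 + n + a) % (n + 2) :=
      congrArg Fin.val hw
    rcases (kk_adj u w).mp hadj with ⟨h1, h2⟩ | ⟨h1, h2⟩
    · -- same column
      have heq : u.2.1 = w.2.1 := congrArg Fin.val h2
      exact ha2 w.1 (by rw [← heq] at hwv; exact hwv)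
    · -- same row
      have heq : u.1.1 = w.1.1 := congrArg Fin.val h2
      have bw := w.2.isLt
      have mw := modCase (n + 2) (2 * w.1.1 + w.2.1) (by omega) (by omega)
      omega
  -- colorCode v t ≤ 1
  have hd : 2 * u.1.1 + n + a + (n + 2 - 2 * v.1.1) < 3 * (n + 2) := by omega
  set jv : ℕ := (2 * u.1.1 + n + a + (n + 2 - 2 * v.1.1)) % (n + 2) with hjv
  have mj := modCase (n + 2) (2 * u.1.1 + n + a + (n + 2 - 2 * v.1.1)) (by omega) hd
  have hjlt : jv < n := by omega
  have hwcol : (2 * v.1.1 + jv) % (n + 2) = (2 * u.1.1 + n + a) % (n + 2) := by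
    have e1 : (2 * v.1.1 + jv) % (n + 2) =
        (2 * v.1.1 + (2 * u.1.1 + n + a + (n + 2 - 2 * v.1.1))) % (n + 2) :=
      Nat.ModEq.add_left _ (Nat.mod_modEq _ _)
    have e2 : 2 * v.1.1 + (2 * u.1.1 + n + a + (n + 2 - 2 * v.1.1)) =
        2 * u.1.1 + n + a + (n + 2) := by omega
    rw [e1, e2]
    exact Nat.add_mod_right _ _
  set w : Fin m × Fin n := (v.1, ⟨jv, hjlt⟩) with hwdef
  have hwmem : c w = t := Fin.ext hwcol
  have hjne : jv ≠ v.2.1 := by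
    intro hj
    apply hct
    rw [← hcc]
    apply Fin.ext
    show (2 * v.1.1 + v.2.1) % (n + 2) = (2 * u.1.1 + n + a) % (n + 2)
    rw [← hj]
    exact hwcol
  have hadjvw : G.Adj v w := by
    rw [kk_adj]
    exact Or.inr ⟨fun hh => hjne (congrArg Fin.val hh).symm, rfl⟩
  have hv1 : colorCode G c v t ≤ 1 := kk_setDist_le_one hwmem hadjvw
  rw [h] at hu2
  omega


/-- For `2 ≤ m ≤ n / 2` and `n ≥ 3`,
`χ_L(K_m □ K_n) ≤ n + 2`. -/
theorem stmt14 (m n : ℕ) (hm : 2 ≤ m) (h₂ : 2 * m ≤ n) (hn : 3 ≤ n) :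
    locatingChromaticNumber
      ((⊤ : SimpleGraph (Fin m)) □ (⊤ : SimpleGraph (Fin n))) ≤ n + 2 := by
  apply Nat.sInf_le
  exact ⟨kcol m n, kcol_surj m n hm hn, fun u v hadj => kcol_proper m n h₂ u v hadj,
    kcol_inj m n hm h₂ hn⟩
end

section
/- For every integer n ≥ 3, the locating chromatic number of K_2 □ K_n equals n + 1. -/
open SimpleGraph

section LocAux

abbrev GG (n : ℕ) : SimpleGraph (Fin 2 × Fin n) :=
  (⊤ : SimpleGraph (Fin 2)) □ (⊤ : SimpleGraph (Fin n))

lemma GG_adj {n : ℕ} {u v : Fin 2 × Fin n} :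
    (GG n).Adj u v ↔ (u.1 ≠ v.1 ∧ u.2 = v.2) ∨ (u.2 ≠ v.2 ∧ u.1 = v.1) := by
  simp [boxProd_adj]

lemma GG_dist_two {n : ℕ} {u v : Fin 2 × Fin n} (h1 : u ≠ v) (h2 : ¬ (GG n).Adj u v) :
    (GG n).dist u v = 2 := by
  have hne : u.1 ≠ v.1 ∧ u.2 ≠ v.2 := by
      constructor
      · intro h; exact h2 (GG_adj.2 (Or.inr ⟨fun h2' => h1 (Prod.ext h h2'), h⟩))
      · intro h; exact h2 (GG_adj.2 (Or.inl ⟨fun h1' => h1 (Prod.ext h1' h), h⟩))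
  have a1 : (GG n).Adj u (u.1, v.2) := GG_adj.2 (Or.inr ⟨hne.2, rfl⟩)
  have a2 : (GG n).Adj (u.1, v.2) v := GG_adj.2 (Or.inl ⟨hne.1, rfl⟩)
  have hle : (GG n).dist u v ≤ 2 := by
    simpa using SimpleGraph.dist_le (Walk.cons a1 (Walk.cons a2 Walk.nil))
  have hpos : 0 < (GG n).dist u v :=
    Reachable.pos_dist_of_ne ⟨Walk.cons a1 (Walk.cons a2 Walk.nil)⟩ h1
  have hne1 : (GG n).dist u v ≠ 1 := fun h => h2 (SimpleGraph.dist_eq_one_iff_adj.1 h)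
  omega

lemma GG_dist_eq_zero {n : ℕ} {u v : Fin 2 × Fin n} (h : (GG n).dist u v = 0) : u = v := by
  by_contra hne
  by_cases ha : (GG n).Adj u v
  · rw [SimpleGraph.dist_eq_one_iff_adj.2 ha] at h; omega
  · rw [GG_dist_two hne ha] at h; omega

lemma setDist_singleton {V : Type*} (G : SimpleGraph V) (v w : V) :
    setDist G v {w} = G.dist v w := by
  simp [setDist]

lemma code_self {V : Type*} (G : SimpleGraph V) {k : ℕ} (c : V → Fin k) (v : V) :
    colorCode G c v (c v) = 0 :=
  Nat.sInf_eq_zero.2 (Or.inl ⟨v, rfl, by simp⟩)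

lemma code_ne_zero {n k : ℕ} (c : Fin 2 × Fin n → Fin k) {v : Fin 2 × Fin n} {i : Fin k}
    (hne : c v ≠ i) (hx : ∃ x, c x = i) : colorCode (GG n) c v i ≠ 0 := by
  intro h0
  obtain ⟨x, hxi⟩ := hx
  have hne' : ((GG n).dist v '' (c ⁻¹' {i})).Nonempty := ⟨_, ⟨x, hxi, rfl⟩⟩
  have hmem := Nat.sInf_mem hne'
  rw [show sInf ((GG n).dist v '' (c ⁻¹' {i})) = colorCode (GG n) c v i from rfl, h0] at hmem
  obtain ⟨y, hyi, hy0⟩ := hmem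
  exact hne (by rw [GG_dist_eq_zero hy0]; exact hyi)

lemma code_eq_one {n k : ℕ} (c : Fin 2 × Fin n → Fin k) {v : Fin 2 × Fin n} {i : Fin k}
    (hne : c v ≠ i) {x : Fin 2 × Fin n} (hxi : c x = i) (hadj : (GG n).Adj v x) :
    colorCode (GG n) c v i = 1 := by
  have h1 : (1:ℕ) ∈ (GG n).dist v '' (c ⁻¹' {i}) :=
    ⟨x, hxi, SimpleGraph.dist_eq_one_iff_adj.2 hadj⟩
  have hle : colorCode (GG n) c v i ≤ 1 := Nat.sInf_le h1
  have hne0 := code_ne_zero c hne ⟨x, hxi⟩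
  omega

def cc (n : ℕ) : Fin 2 × Fin n → Fin (n+1) :=
  fun p => if p.1 = 0 then p.2.castSucc else p.2.succ

lemma cc_pre_zero {n : ℕ} (hn : 3 ≤ n) :
    (cc n) ⁻¹' {(0 : Fin (n+1))} = {((0 : Fin 2), (⟨0, by omega⟩ : Fin n))} := by
  ext ⟨r, x⟩
  by_cases hr : r = 0 <;>
    simp [cc, hr, Prod.ext_iff, Fin.ext_iff] <;> omega

lemma cc_pre_last {n : ℕ} (hn : 3 ≤ n) :
    (cc n) ⁻¹' {Fin.last n} = {((1 : Fin 2), (⟨n-1, by omega⟩ : Fin n))} := by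
  ext ⟨r, x⟩
  by_cases hr : r = 0 <;>
    simp [cc, hr, Prod.ext_iff, Fin.ext_iff] <;>
    [skip; have : r.val = 1 := by omega] <;> omega

lemma code_zero_coord {n : ℕ} (hn : 3 ≤ n) (v : Fin 2 × Fin n) :
    colorCode (GG n) (cc n) v 0 = (GG n).dist v ((0 : Fin 2), (⟨0, by omega⟩ : Fin n)) := by
  simp only [colorCode]
  rw [cc_pre_zero hn, setDist_singleton]

lemma code_last_coord {n : ℕ} (hn : 3 ≤ n) (v : Fin 2 × Fin n) :
    colorCode (GG n) (cc n) v (Fin.last n) =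
      (GG n).dist v ((1 : Fin 2), (⟨n-1, by omega⟩ : Fin n)) := by
  simp only [colorCode]
  rw [cc_pre_last hn, setDist_singleton]

lemma cc_surj {n : ℕ} (hn : 3 ≤ n) : Function.Surjective (cc n) := by
  intro i
  by_cases h : i.val < n
  · exact ⟨((0 : Fin 2), ⟨i.val, h⟩), by simp [cc, Fin.ext_iff]⟩
  · refine ⟨((1 : Fin 2), ⟨n-1, by omega⟩), ?_⟩
    have : i.val = n := by omega
    simp [cc, Fin.ext_iff, this]
    omega

lemma cc_proper {n : ℕ} (hn : 3 ≤ n) :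
    ∀ u v : Fin 2 × Fin n, (GG n).Adj u v → cc n u ≠ cc n v := by
  rintro ⟨a, x⟩ ⟨b, y⟩ hadj heq
  rcases GG_adj.1 hadj with ⟨hr, hc⟩ | ⟨hc, hr⟩ <;>
    fin_cases a <;> fin_cases b <;> simp_all [cc, Fin.ext_iff] <;> omega

lemma cc_claim {n : ℕ} (hn : 3 ≤ n) (x y : Fin n) (hcu : cc n ((0:Fin 2), x) = cc n ((1:Fin 2), y))
    (hcode : colorCode (GG n) (cc n) ((0:Fin 2), x) = colorCode (GG n) (cc n) ((1:Fin 2), y)) :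
    False := by
  have hval : x.val = y.val + 1 := by
    simpa [cc, Fin.ext_iff] using hcu
  have hxn : x.val < n := x.isLt
  by_cases hx : x.val = n - 1
  · -- use coordinate 0
    have h1 : colorCode (GG n) (cc n) ((0:Fin 2), x) 0 = 1 := by
      rw [code_zero_coord hn]
      exact SimpleGraph.dist_eq_one_iff_adj.2
        (GG_adj.2 (Or.inr ⟨by simp [Fin.ext_iff]; omega, rfl⟩))
    have h2 : colorCode (GG n) (cc n) ((1:Fin 2), y) 0 = 2 := by
      rw [code_zero_coord hn]
      refine GG_dist_two (by simp [Prod.ext_iff, Fin.ext_iff]) ?_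
      rw [GG_adj]
      push_neg
      constructor
      · intro _; simp [Fin.ext_iff]; omega
      · intro _; simp [Fin.ext_iff]
    rw [congrFun hcode 0] at h1
    omega
  · -- use coordinate last
    have h1 : colorCode (GG n) (cc n) ((0:Fin 2), x) (Fin.last n) = 2 := by
      rw [code_last_coord hn]
      refine GG_dist_two (by simp [Prod.ext_iff, Fin.ext_iff]) ?_
      rw [GG_adj]
      push_neg
      constructor
      · intro _; simp [Fin.ext_iff]; omega
      · intro _; simp [Fin.ext_iff]
    have h2 : colorCode (GG n) (cc n) ((1:Fin 2), y) (Fin.last n) = 1 := by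
      rw [code_last_coord hn]
      exact SimpleGraph.dist_eq_one_iff_adj.2
        (GG_adj.2 (Or.inr ⟨by simp [Fin.ext_iff]; omega, rfl⟩))
    rw [congrFun hcode (Fin.last n)] at h1
    omega

lemma cc_locating {n : ℕ} (hn : 3 ≤ n) : IsLocatingColoring (GG n) (cc n) := by
  refine ⟨cc_surj hn, cc_proper hn, ?_⟩
  intro u v hcode
  by_cases hcv : cc n u = cc n v
  · obtain ⟨a, x⟩ := u
    obtain ⟨b, y⟩ := v
    by_cases hab : a = b
    · subst hab
      have : x = y := by
        fin_cases a <;> simp [cc, Fin.ext_iff] at hcv <;> omega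
      rw [this]
    · fin_cases a <;> fin_cases b <;> simp_all
      · exact absurd (cc_claim hn x y hcv hcode) (by simp)
      · exact absurd (cc_claim hn y x hcv.symm hcode.symm) (by simp)
  · exfalso
    have h1 := code_self (GG n) (cc n) u
    rw [congrFun hcode (cc n u)] at h1
    exact code_ne_zero (cc n) (Ne.symm hcv) ⟨u, rfl⟩ h1

lemma lower_bound {n k : ℕ} (hn : 3 ≤ n) (c : Fin 2 × Fin n → Fin k)
    (hc : IsLocatingColoring (GG n) c) : n + 1 ≤ k := by
  obtain ⟨hsurj, hproper, hinj⟩ := hc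
  have rowinj : ∀ r : Fin 2, Function.Injective (fun x : Fin n => c (r, x)) := by
    intro r x y hxy
    by_contra hne
    exact hproper (r, x) (r, y) (GG_adj.2 (Or.inr ⟨hne, rfl⟩)) hxy
  have hnk : n ≤ k := by simpa using Fintype.card_le_of_injective _ (rowinj 0)
  by_contra hlt
  have hkn : n = k := by omega
  subst hkn
  have rowsurj : ∀ r : Fin 2, Function.Surjective (fun x : Fin n => c (r, x)) :=
    fun r => Finite.surjective_of_injective (rowinj r)
  have hcode : ∀ (v : Fin 2 × Fin n) (i : Fin n),
      colorCode (GG n) c v i = if c v = i then 0 else 1 := by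
    intro v i
    by_cases h : c v = i
    · rw [if_pos h, ← h]; exact code_self _ _ _
    · rw [if_neg h]
      obtain ⟨x, hx⟩ := rowsurj v.1 i
      refine code_eq_one c h hx (GG_adj.2 (Or.inr ⟨?_, rfl⟩))
      intro hvx
      apply h
      rw [← hx]
      show c v = c (v.1, x)
      exact congrArg c (Prod.ext rfl hvx)
  obtain ⟨y, hy⟩ := rowsurj 1 (c ((0 : Fin 2), (⟨0, by omega⟩ : Fin n)))
  have heq : colorCode (GG n) c ((0:Fin 2), (⟨0, by omega⟩ : Fin n)) =
      colorCode (GG n) c ((1:Fin 2), y) := by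
    funext i
    rw [hcode, hcode]
    simp only at hy
    rw [hy]
  have := hinj heq
  simp [Prod.ext_iff] at this


end LocAux

/-- For every `n ≥ 3`, `χ_L(K_2 □ K_n) = n + 1`. -/
theorem stmt15 (n : ℕ) (hn : 3 ≤ n) :
    locatingChromaticNumber
      ((⊤ : SimpleGraph (Fin 2)) □ (⊤ : SimpleGraph (Fin n))) = n + 1 := by
  refine le_antisymm (Nat.sInf_le ⟨cc n, cc_locating hn⟩)
    (le_csInf ⟨n + 1, cc n, cc_locating hn⟩ ?_)
  rintro k ⟨c, hc⟩
  exact lower_bound hn c hc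
end

section
/- The locating chromatic number of K_3 □ K_3 equals 5. -/
open SimpleGraph

/-! ### Auxiliary material -/

namespace Stmt16Aux

abbrev V9 := Fin 3 × Fin 3

abbrev G9 : SimpleGraph V9 := (⊤ : SimpleGraph (Fin 3)) □ (⊤ : SimpleGraph (Fin 3))

def adj' (u v : V9) : Bool := (u.1 = v.1 ∧ u.2 ≠ v.2) ∨ (u.2 = v.2 ∧ u.1 ≠ v.1)

lemma adj_iff (u v : V9) : G9.Adj u v ↔ adj' u v = true := by
  simp only [G9, SimpleGraph.boxProd_adj, top_adj, adj', decide_eq_true_eq]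
  tauto

lemma adj_row (a : Fin 3) {b b' : Fin 3} (h : b ≠ b') : G9.Adj (a, b) (a, b') := by
  rw [adj_iff]
  simp [adj', h]

lemma adj_col {a a' : Fin 3} (b : Fin 3) (h : a ≠ a') : G9.Adj (a, b) (a', b) := by
  rw [adj_iff]
  simp [adj', h]

lemma not_adj_ne {u v : V9} (hna : ¬ G9.Adj u v) (hne : u ≠ v) :
    u.1 ≠ v.1 ∧ u.2 ≠ v.2 := by
  obtain ⟨a, b⟩ := u
  obtain ⟨a', b'⟩ := v
  by_cases h1 : a = a'
  · by_cases h2 : b = b'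
    · exact absurd (by rw [h1, h2]) hne
    · exact absurd (h1 ▸ adj_row a h2) hna
  · by_cases h2 : b = b'
    · exact absurd (h2 ▸ adj_col b h1) hna
    · exact ⟨h1, h2⟩

lemma reach (u v : V9) : G9.Reachable u v := by
  by_cases h : u = v
  · exact h ▸ Reachable.refl u
  by_cases ha : G9.Adj u v
  · exact ha.reachable
  · obtain ⟨h1, h2⟩ := not_adj_ne ha h
    have w1 : G9.Adj u (u.1, v.2) := by
      have := adj_row u.1 h2
      simpa using this
    have w2 : G9.Adj (u.1, v.2) v := by
      have := adj_col v.2 h1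
      simpa using this
    exact w1.reachable.trans w2.reachable

lemma dist_two (u v : V9) (hne : u ≠ v) (hna : ¬ G9.Adj u v) : G9.dist u v = 2 := by
  obtain ⟨h1, h2⟩ := not_adj_ne hna hne
  have w1 : G9.Adj u (u.1, v.2) := by
    have := adj_row u.1 h2
    simpa using this
  have w2 : G9.Adj (u.1, v.2) v := by
    have := adj_col v.2 h1
    simpa using this
  have hle : G9.dist u v ≤ 2 := by
    have := SimpleGraph.dist_le (Walk.cons w1 (Walk.cons w2 Walk.nil))
    simpa using this
  have h0 : ¬ G9.dist u v = 0 := by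
    intro h0
    rcases SimpleGraph.dist_eq_zero_iff_eq_or_not_reachable.mp h0 with h' | h'
    · exact hne h'
    · exact h' (reach u v)
  have hone : ¬ G9.dist u v = 1 := fun h => hna (SimpleGraph.dist_eq_one_iff_adj.mp h)
  omega

open scoped Classical in
lemma setDist_eq (v : V9) (S : Set V9) (hS : S.Nonempty) :
    setDist G9 v S = if v ∈ S then 0 else if ∃ u ∈ S, G9.Adj v u then 1 else 2 := by
  unfold setDist
  split_ifs with h1 h2
  · exact Nat.sInf_eq_zero.mpr (Or.inl ⟨v, h1, SimpleGraph.dist_self⟩)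
  · obtain ⟨u, hu, hadj⟩ := h2
    have hmem : 1 ∈ G9.dist v '' S := ⟨u, hu, SimpleGraph.dist_eq_one_iff_adj.mpr hadj⟩
    have hle : sInf (G9.dist v '' S) ≤ 1 := Nat.sInf_le hmem
    have hne : sInf (G9.dist v '' S) ≠ 0 := by
      intro h0
      rcases Nat.sInf_eq_zero.mp h0 with h | h
      · obtain ⟨w, hw, hd⟩ := h
        rcases SimpleGraph.dist_eq_zero_iff_eq_or_not_reachable.mp hd with h' | h'
        · exact h1 (h' ▸ hw)
        · exact h' (reach v w)
      · exact absurd h ((hS.image _).ne_empty)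
    omega
  · have hall : ∀ n ∈ G9.dist v '' S, n = 2 := by
      rintro n ⟨u, hu, rfl⟩
      refine dist_two v u (fun h => h1 (h ▸ hu)) (fun h => h2 ⟨u, hu, h⟩)
    have hmem : sInf (G9.dist v '' S) ∈ G9.dist v '' S :=
      Nat.sInf_mem (hS.image _)
    exact hall _ hmem

def code' {k : ℕ} (c : V9 → Fin k) (v : V9) (i : Fin k) : ℕ :=
  if c v = i then 0 else if ∃ u, adj' v u = true ∧ c u = i then 1 else 2

abbrev GoodP {k : ℕ} (c : V9 → Fin k) : Prop :=
  (∀ u v : V9, adj' u v = true → c u ≠ c v) ∧ Function.Surjective c ∧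
    Function.Injective (fun v (i : Fin k) => code' c v i)

lemma colorCode_eq {k : ℕ} (c : V9 → Fin k) (hs : Function.Surjective c) (v : V9) :
    colorCode G9 c v = fun i => code' c v i := by
  classical
  funext i
  have hS : (c ⁻¹' {i}).Nonempty := by
    obtain ⟨u, hu⟩ := hs i
    exact ⟨u, by simp [hu]⟩
  unfold colorCode code'
  rw [setDist_eq v _ hS]
  have h1 : (v ∈ c ⁻¹' {i}) ↔ (c v = i) := by simp
  have h2 : (∃ u ∈ c ⁻¹' {i}, G9.Adj v u) ↔ (∃ u, adj' v u = true ∧ c u = i) := by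
    constructor
    · rintro ⟨u, hu, hadj⟩
      exact ⟨u, (adj_iff v u).mp hadj, by simpa using hu⟩
    · rintro ⟨u, hadj, hu⟩
      exact ⟨u, by simp [hu], (adj_iff v u).mpr hadj⟩
  exact if_congr h1 rfl (if_congr h2 rfl rfl)

lemma loc_iff {k : ℕ} (c : V9 → Fin k) : IsLocatingColoring G9 c ↔ GoodP c := by
  constructor
  · rintro ⟨hs, hp, hi⟩
    refine ⟨fun u v h => hp u v ((adj_iff u v).mpr h), hs, ?_⟩
    intro u v h
    exact hi ((colorCode_eq c hs u).trans ((h : (fun i => code' c u i) = fun i => code' c v i).trans (colorCode_eq c hs v).symm))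
  · rintro ⟨hp, hs, hi⟩
    refine ⟨hs, fun u v h => hp u v ((adj_iff u v).mp h), ?_⟩
    intro u v h
    exact hi (((colorCode_eq c hs u).symm.trans (h.trans (colorCode_eq c hs v)) :
      (fun i => code' c u i) = fun i => code' c v i))

lemma goodP_perm {k : ℕ} (σ : Fin k ≃ Fin k) (c : V9 → Fin k) (h : GoodP c) :
    GoodP (⇑σ ∘ c) := by
  obtain ⟨hp, hs, hi⟩ := h
  have key : ∀ (w : V9) (i : Fin k), code' (⇑σ ∘ c) w (σ i) = code' c w i := by
    intro w i
    unfold code'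
    simp [Function.comp, EmbeddingLike.apply_eq_iff_eq]
  refine ⟨fun u v ha e => hp u v ha (σ.injective e), σ.surjective.comp hs, ?_⟩
  intro u v h
  apply hi
  funext i
  have h2 : code' (⇑σ ∘ c) u (σ i) = code' (⇑σ ∘ c) v (σ i) := congrFun h (σ i)
  show code' c u i = code' c v i
  rw [← key u i, ← key v i]
  exact h2

def ext3 {k : ℕ} (r0 r1 r2 : Fin 3 → Fin k) : V9 → Fin k :=
  fun v => (![r0, r1, r2]) v.1 v.2

lemma goodP_vperm {k : ℕ} (π : V9 ≃ V9)
    (hadj : ∀ u v : V9, adj' (π u) (π v) = adj' u v) {c : V9 → Fin k} (h : GoodP c) :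
    GoodP (c ∘ ⇑π) := by
  obtain ⟨hp, hs, hi⟩ := h
  have key : ∀ (w : V9) (i : Fin k), code' (c ∘ ⇑π) w i = code' c (π w) i := by
    intro w i
    unfold code'
    have : (∃ u, adj' w u = true ∧ c (π u) = i) ↔ (∃ u, adj' (π w) u = true ∧ c u = i) := by
      constructor
      · rintro ⟨u, h1, h2⟩
        exact ⟨π u, by rw [hadj]; exact h1, h2⟩
      · rintro ⟨u, h1, h2⟩
        refine ⟨π.symm u, ?_, by simpa using h2⟩
        have h3 := hadj w (π.symm u)
        rw [Equiv.apply_symm_apply] at h3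
        rw [← h3]
        exact h1
    simp only [Function.comp_apply]
    exact if_congr Iff.rfl rfl (if_congr this rfl rfl)
  refine ⟨fun u v ha e => hp (π u) (π v) (by rw [hadj]; exact ha) e,
    hs.comp π.surjective, ?_⟩
  intro u v h
  have : code' c (π u) = code' c (π v) := by
    funext i
    rw [← key u i, ← key v i]
    exact congrFun h i
  have h2 : π u = π v := by
    apply hi
    funext i
    exact congrFun this i
  exact π.injective h2

def rswap : V9 ≃ V9 := (Equiv.swap (1 : Fin 3) 2).prodCongr (Equiv.refl (Fin 3))

lemma rswap_adj : ∀ u v : V9, adj' (rswap u) (rswap v) = adj' u v := by decide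

lemma rswap_ext {k : ℕ} (r0 r1 r2 : Fin 3 → Fin k) :
    (ext3 r0 r1 r2) ∘ ⇑rswap = ext3 r0 r2 r1 := by
  funext v
  obtain ⟨i, j⟩ := v
  fin_cases i <;> rfl

def enc {k : ℕ} (r : Fin 3 → Fin k) : ℕ := (r 0).val * 100 + (r 1).val * 10 + (r 2).val

lemma no1 : ∀ c : V9 → Fin 1, ¬ GoodP c := by decide
set_option maxHeartbeats 4000000 in
set_option maxRecDepth 10000 in
lemma no2 : ∀ c : V9 → Fin 2, ¬ GoodP c := by decide

set_option maxHeartbeats 400000000 in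
set_option maxRecDepth 100000 in
lemma no3half : ∀ r1 r2 : Fin 3 → Fin 3, enc r1 ≤ enc r2 →
    ¬ GoodP (ext3 ![0,1,2] r1 r2) := by decide

set_option maxHeartbeats 400000000 in
set_option maxRecDepth 100000 in
lemma no4half : ∀ r1 r2 : Fin 3 → Fin 4, enc r1 ≤ enc r2 →
    ¬ GoodP (ext3 ![0,1,2] r1 r2) := by decide

lemma no3 : ∀ r1 r2 : Fin 3 → Fin 3, ¬ GoodP (ext3 ![0,1,2] r1 r2) := by
  intro r1 r2 h
  rcases le_total (enc r1) (enc r2) with hle | hle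
  · exact no3half r1 r2 hle h
  · refine no3half r2 r1 hle ?_
    rw [← rswap_ext]
    exact goodP_vperm rswap rswap_adj h

lemma no4 : ∀ r1 r2 : Fin 3 → Fin 4, ¬ GoodP (ext3 ![0,1,2] r1 r2) := by
  intro r1 r2 h
  rcases le_total (enc r1) (enc r2) with hle | hle
  · exact no4half r1 r2 hle h
  · refine no4half r2 r1 hle ?_
    rw [← rswap_ext]
    exact goodP_vperm rswap rswap_adj h

lemma exists_perm3 : ∀ a b d : Fin 3, a ≠ b → a ≠ d → b ≠ d →
    ∃ σ : Fin 3 ≃ Fin 3, σ a = 0 ∧ σ b = 1 ∧ σ d = 2 := by decide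

lemma exists_perm4 : ∀ a b d : Fin 4, a ≠ b → a ≠ d → b ≠ d →
    ∃ σ : Fin 4 ≃ Fin 4, σ a = 0 ∧ σ b = 1 ∧ σ d = 2 := by decide

lemma normalize {k : ℕ} [NeZero k] (c : V9 → Fin k) (h : GoodP c)
    (σ : Fin k ≃ Fin k) (h0 : σ (c (0,0)) = 0) (h1 : σ (c (0,1)) = 1)
    (h2 : σ (c (0,2)) = 2) :
    GoodP (ext3 ![0,1,2] (fun j => σ (c (1,j))) (fun j => σ (c (2,j)))) := by
  have hg := goodP_perm σ c h
  have he : ⇑σ ∘ c = ext3 ![0,1,2] (fun j => σ (c (1,j))) (fun j => σ (c (2,j))) := by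
    funext v
    obtain ⟨i, j⟩ := v
    fin_cases i <;> fin_cases j <;>
      first
        | exact h0
        | exact h1
        | exact h2
        | rfl
  rwa [he] at hg

lemma no3' : ∀ c : V9 → Fin 3, ¬ GoodP c := by
  intro c h
  have hab := h.1 (0,0) (0,1) (by decide)
  have had := h.1 (0,0) (0,2) (by decide)
  have hbd := h.1 (0,1) (0,2) (by decide)
  obtain ⟨σ, h0, h1, h2⟩ := exists_perm3 _ _ _ hab had hbd
  exact no3 _ _ (normalize c h σ h0 h1 h2)

lemma no4' : ∀ c : V9 → Fin 4, ¬ GoodP c := by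
  intro c h
  have hab := h.1 (0,0) (0,1) (by decide)
  have had := h.1 (0,0) (0,2) (by decide)
  have hbd := h.1 (0,1) (0,2) (by decide)
  obtain ⟨σ, h0, h1, h2⟩ := exists_perm4 _ _ _ hab had hbd
  exact no4 _ _ (normalize c h σ h0 h1 h2)

def cexp : V9 → Fin 5 := fun v => (![![0,1,2],![1,0,3],![2,4,0]]) v.1 v.2

set_option maxHeartbeats 4000000 in
lemma good_cexp : GoodP cexp := by decide

end Stmt16Aux

open Stmt16Aux in
/-- `χ_L(K_3 □ K_3) = 5`. -/
theorem stmt16 :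
    locatingChromaticNumber
      ((⊤ : SimpleGraph (Fin 3)) □ (⊤ : SimpleGraph (Fin 3))) = 5 := by
  have hmem : 5 ∈ {k : ℕ | ∃ c : V9 → Fin k, IsLocatingColoring G9 c} :=
    ⟨cexp, (loc_iff cexp).mpr good_cexp⟩
  have hlb : ∀ k ∈ {k : ℕ | ∃ c : V9 → Fin k, IsLocatingColoring G9 c}, 5 ≤ k := by
    rintro k ⟨c, hc⟩
    by_contra hlt
    push_neg at hlt
    interval_cases k
    · exact (c (0,0)).elim0
    · exact no1 c ((loc_iff c).mp hc)
    · exact no2 c ((loc_iff c).mp hc)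
    · exact no3' c ((loc_iff c).mp hc)
    · exact no4' c ((loc_iff c).mp hc)
  exact le_antisymm (Nat.sInf_le hmem) (le_csInf ⟨5, hmem⟩ hlb)
end
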